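/- arXiv:2510.04501 — 7 statements merged into one kernel-verified Lean document; each statement's English description precedes it below -/
import Mathlib

section
/- Let a, b, c, d > 0 satisfy the strict weak competition condition b < a < 1/c and let s ∈ ℝ be arbitrary. If (u, v) is a pair of twice continuously differentiable functions solving u'' − s·u' + u·(1 − u − c·v) = 0 and d·v'' − s·v' + v·(a − b·u − v) = 0 on ℝ and satisfying 0 < u(ξ) < u* and 0 < v(ξ) < v* for all ξ ∈ ℝ, then u and v are each monotone on ℝ (each is either nondecreasing on all of ℝ or nonincreasing on all of ℝ). -/
/-!
Each component `w` of the solution satisfies `w'' - σ w' < 0`, with `σ = s` for `u` and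
`σ = s / d` for `v`: inside the box the reaction terms `1 - u - c v` and `a - b u - v` are positive,
because `u* + c v* = 1` and `b u* + v* = a`. Hence `exp (-σ x) w'` is strictly decreasing.
For `σ ≥ 0`, a point with `w'(x₀) < 0` would give `w' ≤ w'(x₀)` on `[x₀, ∞)`, so `w → -∞`,
contradicting `w > 0`; thus `w` is nondecreasing. For `σ ≤ 0` the reflection `x ↦ -x` makes
`w` nonincreasing.
-/

open Filter Real Set

variable {u f : ℝ → ℝ} {σ : ℝ}

theorem tendsto_atBot_of_deriv_le_neg {x₀ C : ℝ} (hu : Differentiable ℝ u) (hC : C < 0)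
    (h : ∀ x ≥ x₀, deriv u x ≤ C) : Tendsto u atTop atBot := by
  have hlin : ∀ x ≥ x₀, u x ≤ u x₀ + C * (x - x₀) := fun x hx => by
    have := (convex_Ici x₀).image_sub_le_mul_sub_of_deriv_le hu.continuous.continuousOn
      hu.differentiableOn (fun y hy => h y (interior_subset hy)) x₀ (mem_Ici.2 le_rfl) x hx hx
    linarith
  refine tendsto_atBot_mono' _ ((eventually_ge_atTop x₀).mono hlin) ?_
  exact tendsto_atBot_add_const_left _ _
    ((tendsto_atTop_add_const_right _ (-x₀) tendsto_id).const_mul_atTop_of_neg hC)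

theorem strictAnti_exp_mul_of_deriv_sub_mul_neg (hf : Differentiable ℝ f)
    (h : ∀ x, deriv f x - σ * f x < 0) : StrictAnti fun x => exp (-σ * x) * f x := by
  refine strictAnti_of_deriv_neg fun x => ?_
  have hd : HasDerivAt (fun x => exp (-σ * x) * f x) (exp (-σ * x) * (deriv f x - σ * f x)) x := by
    refine (((hasDerivAt_id' x).const_mul (-σ)).exp.mul (hf x).hasDerivAt).congr_deriv ?_
    ring
  rw [hd.deriv]
  exact mul_neg_of_pos_of_neg (exp_pos _) (h x)

theorem le_of_deriv_sub_mul_neg_of_neg (hσ : 0 ≤ σ) (hf : Differentiable ℝ f)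
    (h : ∀ x, deriv f x - σ * f x < 0) {x y : ℝ} (hxy : x ≤ y) (hx : f x < 0) : f y ≤ f x := by
  have hanti := (strictAnti_exp_mul_of_deriv_sub_mul_neg hf h).antitone hxy
  have hgrowth : 1 ≤ exp (σ * (y - x)) := one_le_exp (mul_nonneg hσ (sub_nonneg.2 hxy))
  calc f y = exp (σ * y) * (exp (-σ * y) * f y) := by
        rw [← mul_assoc, ← exp_add]; simp
    _ ≤ exp (σ * y) * (exp (-σ * x) * f x) := mul_le_mul_of_nonneg_left hanti (exp_pos _).le
    _ = exp (σ * (y - x)) * f x := by rw [← mul_assoc, ← exp_add]; ring_nf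
    _ ≤ f x := by nlinarith

theorem monotone_of_deriv_deriv_sub_mul_neg (hσ : 0 ≤ σ) (hu : Differentiable ℝ u)
    (hu' : Differentiable ℝ (deriv u)) (hbdd : BddBelow (range u))
    (h : ∀ x, deriv (deriv u) x - σ * deriv u x < 0) : Monotone u :=
  monotone_of_deriv_nonneg hu fun _ => not_lt.1 fun hx₀ =>
    not_bddBelow_of_tendsto_atBot (tendsto_atBot_of_deriv_le_neg hu hx₀
      fun _ hx => le_of_deriv_sub_mul_neg_of_neg hσ hu' h hx hx₀) hbdd

theorem antitone_of_deriv_deriv_sub_mul_neg (hσ : σ ≤ 0) (hu : Differentiable ℝ u)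
    (hu' : Differentiable ℝ (deriv u)) (hbdd : BddBelow (range u))
    (h : ∀ x, deriv (deriv u) x - σ * deriv u x < 0) : Antitone u := by
  have hd : deriv (fun x => u (-x)) = fun x => -deriv u (-x) := funext fun x => deriv_comp_neg u x
  have hmono : Monotone fun x => u (-x) := by
    refine monotone_of_deriv_deriv_sub_mul_neg (neg_nonneg.2 hσ) (hu.comp differentiable_neg)
      (hd ▸ (hu'.comp differentiable_neg).neg) ?_ fun x => ?_
    · rwa [← neg_surjective.range_comp u] at hbdd
    · rw [hd, deriv.fun_neg, deriv_comp_neg (deriv u), neg_neg]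
      linarith [h (-x)]
  intro x y hxy
  simpa using hmono (neg_le_neg hxy)

theorem monotone_or_antitone_of_deriv_deriv_sub_mul_neg (hu : Differentiable ℝ u)
    (hu' : Differentiable ℝ (deriv u)) (hbdd : BddBelow (range u))
    (h : ∀ x, deriv (deriv u) x - σ * deriv u x < 0) : Monotone u ∨ Antitone u :=
  (le_total 0 σ).imp (monotone_of_deriv_deriv_sub_mul_neg · hu hu' hbdd h)
    (antitone_of_deriv_deriv_sub_mul_neg · hu hu' hbdd h)

theorem add_mul_lt_one_of_lt_coexistence {a b c u v : ℝ} (hc : 0 ≤ c) (hbc : 1 - b * c ≠ 0)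
    (hu : u < (1 - a * c) / (1 - b * c)) (hv : v < (a - b) / (1 - b * c)) : u + c * v < 1 :=
  calc u + c * v < (1 - a * c) / (1 - b * c) + c * ((a - b) / (1 - b * c)) :=
        add_lt_add_of_lt_of_le hu (mul_le_mul_of_nonneg_left hv.le hc)
    _ = 1 := by rw [mul_div_assoc', ← add_div, div_eq_one_iff_eq hbc]; ring

theorem mul_add_lt_of_lt_coexistence {a b c u v : ℝ} (hb : 0 ≤ b) (hbc : 1 - b * c ≠ 0)
    (hu : u < (1 - a * c) / (1 - b * c)) (hv : v < (a - b) / (1 - b * c)) : b * u + v < a :=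
  calc b * u + v < b * ((1 - a * c) / (1 - b * c)) + (a - b) / (1 - b * c) :=
        add_lt_add_of_le_of_lt (mul_le_mul_of_nonneg_left hu.le hb) hv
    _ = a := by field_simp; ring

theorem monotone_of_range_in_box_general
    (a b c d : ℝ) (hb : 0 < b) (hc : 0 < c) (hd : 0 < d) (s : ℝ)
    (u v : ℝ → ℝ) (hu : ContDiff ℝ 2 u) (hv : ContDiff ℝ 2 v)
    (hueq : ∀ ξ : ℝ, deriv (deriv u) ξ - s * deriv u ξ + u ξ * (1 - u ξ - c * v ξ) = 0)
    (hveq : ∀ ξ : ℝ, d * deriv (deriv v) ξ - s * deriv v ξ + v ξ * (a - b * u ξ - v ξ) = 0)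
    (hub : ∀ ξ : ℝ, 0 < u ξ ∧ u ξ < (1 - a * c) / (1 - b * c))
    (hvb : ∀ ξ : ℝ, 0 < v ξ ∧ v ξ < (a - b) / (1 - b * c)) :
    (Monotone u ∨ Antitone u) ∧ (Monotone v ∨ Antitone v) := by
  -- otherwise `u*` would be the junk value `x / 0 = 0`, leaving no room for `0 < u 0 < u*`
  have hbc : 1 - b * c ≠ 0 := fun h => by
    have := hub 0
    rw [h, div_zero] at this
    linarith
  have hu_react (ξ : ℝ) : 0 < u ξ * (1 - u ξ - c * v ξ) := mul_pos (hub ξ).1 <| by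
    linarith [add_mul_lt_one_of_lt_coexistence hc.le hbc (hub ξ).2 (hvb ξ).2]
  have hv_react (ξ : ℝ) : 0 < v ξ * (a - b * u ξ - v ξ) := mul_pos (hvb ξ).1 <| by
    linarith [mul_add_lt_of_lt_coexistence hb.le hbc (hub ξ).2 (hvb ξ).2]
  constructor
  · refine monotone_or_antitone_of_deriv_deriv_sub_mul_neg (σ := s) (hu.differentiable two_ne_zero)
      ((hu.deriv' (n := 1)).differentiable one_ne_zero) ⟨0, forall_mem_range.2 fun ξ => (hub ξ).1.le⟩
      fun ξ => ?_
    linarith [hueq ξ, hu_react ξ]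
  · refine monotone_or_antitone_of_deriv_deriv_sub_mul_neg (σ := s / d) (hv.differentiable two_ne_zero)
      ((hv.deriv' (n := 1)).differentiable one_ne_zero) ⟨0, forall_mem_range.2 fun ξ => (hvb ξ).1.le⟩
      fun ξ => neg_of_mul_neg_right ?_ hd.le
    rw [mul_sub, ← mul_assoc, mul_div_cancel₀ _ hd.ne']
    linarith [hveq ξ, hv_react ξ]

/-- If a positive solution of the traveling-wave system stays strictly between
`0` and the coexistence equilibrium `(u*, v*)`, then both components are monotone. -/
theorem monotone_of_range_in_box
    (a b c d : ℝ) (ha : 0 < a) (hb : 0 < b) (hc : 0 < c) (hd : 0 < d)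
    (hba : b < a) (hac : a < 1 / c) (s : ℝ)
    (u v : ℝ → ℝ) (hu : ContDiff ℝ 2 u) (hv : ContDiff ℝ 2 v)
    (hueq : ∀ ξ : ℝ, deriv (deriv u) ξ - s * deriv u ξ + u ξ * (1 - u ξ - c * v ξ) = 0)
    (hveq : ∀ ξ : ℝ, d * deriv (deriv v) ξ - s * deriv v ξ + v ξ * (a - b * u ξ - v ξ) = 0)
    (hub : ∀ ξ : ℝ, 0 < u ξ ∧ u ξ < (1 - a * c) / (1 - b * c))
    (hvb : ∀ ξ : ℝ, 0 < v ξ ∧ v ξ < (a - b) / (1 - b * c)) :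
    (Monotone u ∨ Antitone u) ∧ (Monotone v ∨ Antitone v) :=
  monotone_of_range_in_box_general a b c d hb hc hd s u v hu hv hueq hveq hub hvb
end

section
/- Assume a, b, c, d > 0 with b < a ≤ 1/c (strict or critical weak competition). If s < s* := max{2, 2√(a·d)}, then there exists no pair of twice continuously differentiable functions u, v : ℝ → ℝ with u(ξ) > 0 and v(ξ) > 0 for all ξ ∈ ℝ satisfying u'' − s·u' + u·(1 − u − c·v) = 0 and d·v'' − s·v' + v·(a − b·u − v) = 0 on ℝ together with lim_{ξ→−∞}(u(ξ), v(ξ)) = (0, 0). -/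
open Filter Real Set Topology

/-!
Near `-∞` both components tend to `0`, so `u` solves `u'' - s u' + Q u = 0` with `Q → 1`, and
`v` solves `v'' - (s / d) v' + P v = 0` with `P → a / d`. When `s² < 4` (resp. `s² < 4ad`), Sturm
comparison with the damped sine `e^{st/2} sin (ω (t - ξ₀))`, through the weighted Wronskian
`e^{-st} (w' y - w y')`, forces a zero of the solution on every interval of length `π / ω` far
enough to the left. When `s < 0`, `e^{-sξ} u'` is strictly decreasing near `-∞`: either `u` is
nonincreasing there, contradicting `u → 0⁺`, or `u'` is bounded below by a positive constant
further left, forcing `u` to become negative.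
-/

noncomputable def dampedSine (s ω ξ₀ t : ℝ) : ℝ := exp (s * t / 2) * sin (ω * (t - ξ₀))

noncomputable def dampedSineDeriv (s ω ξ₀ t : ℝ) : ℝ :=
  exp (s * t / 2) * (s / 2 * sin (ω * (t - ξ₀)) + ω * cos (ω * (t - ξ₀)))

lemma hasDerivAt_exp_mul_div_two (s t : ℝ) :
    HasDerivAt (fun t => exp (s * t / 2)) (s / 2 * exp (s * t / 2)) t := by
  simpa [mul_comm, mul_div_assoc] using ((hasDerivAt_id t).const_mul s).div_const 2 |>.exp

section DampedSine

variable (s ω ξ₀ t : ℝ)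

lemma hasDerivAt_dampedSine :
    HasDerivAt (dampedSine s ω ξ₀) (dampedSineDeriv s ω ξ₀ t) t := by
  have hsin := (((hasDerivAt_id t).sub_const ξ₀).const_mul ω).sin
  refine ((hasDerivAt_exp_mul_div_two s t).mul hsin).congr_deriv ?_
  simp only [dampedSineDeriv, id]
  ring

lemma hasDerivAt_dampedSineDeriv :
    HasDerivAt (dampedSineDeriv s ω ξ₀)
      (s * dampedSineDeriv s ω ξ₀ t - (s ^ 2 / 4 + ω ^ 2) * dampedSine s ω ξ₀ t) t := by
  have hlin := ((hasDerivAt_id t).sub_const ξ₀).const_mul ω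
  have hinner := (hlin.sin.const_mul (s / 2)).add (hlin.cos.const_mul ω)
  refine ((hasDerivAt_exp_mul_div_two s t).mul hinner).congr_deriv ?_
  simp only [dampedSine, dampedSineDeriv, Pi.add_apply, id]
  ring

end DampedSine

lemma dampedSine_nonneg {s ω ξ₀ t : ℝ} (hω : 0 < ω) (ht : t ∈ Icc ξ₀ (ξ₀ + π / ω)) :
    0 ≤ dampedSine s ω ξ₀ t := by
  refine mul_nonneg (exp_pos _).le (sin_nonneg_of_nonneg_of_le_pi ?_ ?_)
  · exact mul_nonneg hω.le (sub_nonneg.mpr ht.1)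
  · have := mul_le_mul_of_nonneg_left (sub_le_iff_le_add'.mpr ht.2) hω.le
    rwa [mul_div_cancel₀ _ hω.ne'] at this

lemma hasDerivAt_exp_mul_wronskian {w y y' : ℝ → ℝ} {s κ t : ℝ} (hw : ContDiff ℝ 2 w)
    (hy : HasDerivAt y (y' t) t) (hy' : HasDerivAt y' (s * y' t - κ * y t) t) :
    HasDerivAt (fun t => exp (-(s * t)) * (deriv w t * y t - w t * y' t))
      (exp (-(s * t)) * (deriv (deriv w) t - s * deriv w t + κ * w t) * y t) t := by
  have hexp : HasDerivAt (fun t => exp (-(s * t))) (-s * exp (-(s * t))) t := by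
    simpa [mul_comm] using ((hasDerivAt_id t).const_mul s).neg.exp
  have hw' := (hw.differentiable_deriv_two t).hasDerivAt
  have hw₀ := (hw.differentiable two_ne_zero t).hasDerivAt
  exact (hexp.mul ((hw'.mul hy).sub (hw₀.mul hy'))).congr_deriv
    (by simp only [Pi.sub_apply, Pi.mul_apply]; ring)

lemma exists_nonpos_of_sturm {w Q : ℝ → ℝ} {s ω ξ₀ : ℝ} (hw : ContDiff ℝ 2 w) (hω : 0 < ω)
    (hQ : ∀ ξ ∈ Icc ξ₀ (ξ₀ + π / ω), s ^ 2 / 4 + ω ^ 2 ≤ Q ξ)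
    (heq : ∀ ξ ∈ Icc ξ₀ (ξ₀ + π / ω), deriv (deriv w) ξ - s * deriv w ξ + Q ξ * w ξ = 0) :
    ∃ ξ ∈ Icc ξ₀ (ξ₀ + π / ω), w ξ ≤ 0 := by
  by_contra! hpos
  set R := ξ₀ + π / ω with hR
  have hξ₀R : ξ₀ ≤ R := le_add_of_nonneg_right (div_pos pi_pos hω).le
  set W := fun t =>
    exp (-(s * t)) * (deriv w t * dampedSine s ω ξ₀ t - w t * dampedSineDeriv s ω ξ₀ t)
  have hW (t : ℝ) := hasDerivAt_exp_mul_wronskian hw (hasDerivAt_dampedSine s ω ξ₀ t)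
    (hasDerivAt_dampedSineDeriv s ω ξ₀ t)
  have hanti : AntitoneOn W (Icc ξ₀ R) := by
    refine antitoneOn_of_hasDerivWithinAt_nonpos (convex_Icc _ _)
      (HasDerivAt.continuousOn fun t _ => hW t) (fun t _ => (hW t).hasDerivWithinAt) fun t ht => ?_
    have ht := interior_subset ht
    have hκQ : (s ^ 2 / 4 + ω ^ 2 - Q t) * w t ≤ 0 :=
      mul_nonpos_of_nonpos_of_nonneg (sub_nonpos.mpr (hQ t ht)) (hpos t ht).le
    rw [show deriv (deriv w) t - s * deriv w t + (s ^ 2 / 4 + ω ^ 2) * w t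
        = (s ^ 2 / 4 + ω ^ 2 - Q t) * w t by linear_combination heq t ht]
    exact mul_nonpos_of_nonpos_of_nonneg
      (mul_nonpos_of_nonneg_of_nonpos (exp_pos _).le hκQ) (dampedSine_nonneg hω ht)
  have hπ : ω * (R - ξ₀) = π := by rw [hR]; field_simp; ring
  have hWξ₀ : W ξ₀ = -(exp (-(s * ξ₀)) * exp (s * ξ₀ / 2) * ω * w ξ₀) := by
    simp only [W, dampedSine, dampedSineDeriv, sub_self, mul_zero, sin_zero, cos_zero]
    ring
  have hWR : W R = exp (-(s * R)) * exp (s * R / 2) * ω * w R := by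
    simp only [W, dampedSine, dampedSineDeriv, hπ, sin_pi, cos_pi]
    ring
  have hWξ₀_neg : W ξ₀ < 0 := by
    rw [hWξ₀, neg_lt_zero]
    exact mul_pos (by positivity) (hpos ξ₀ ⟨le_rfl, hξ₀R⟩)
  have hWR_pos : 0 < W R := by
    rw [hWR]
    exact mul_pos (by positivity) (hpos R ⟨hξ₀R, le_rfl⟩)
  exact (hanti ⟨le_rfl, hξ₀R⟩ ⟨hξ₀R, le_rfl⟩ hξ₀R).not_gt (hWξ₀_neg.trans hWR_pos)

lemma not_eventually_pos_of_sq_lt {w Q : ℝ → ℝ} {s q : ℝ} (hw : ContDiff ℝ 2 w)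
    (hsq : s ^ 2 < 4 * q) (hQ : Tendsto Q atBot (𝓝 q))
    (heq : ∀ᶠ ξ in atBot, deriv (deriv w) ξ - s * deriv w ξ + Q ξ * w ξ = 0) :
    ¬ ∀ᶠ ξ in atBot, 0 < w ξ := by
  intro hpos
  have hgap : 0 < q - s ^ 2 / 4 := by linarith
  set ω := √(q - s ^ 2 / 4) / 2
  have hω : 0 < ω := by positivity
  have hωq : s ^ 2 / 4 + ω ^ 2 < q := by
    rw [div_pow, sq_sqrt hgap.le]
    linarith
  obtain ⟨R, hR⟩ := eventually_atBot.mp ((hQ.eventually_const_le hωq).and (heq.and hpos))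
  have hIcc : Icc (R - π / ω) (R - π / ω + π / ω) ⊆ Iic R := by
    rw [sub_add_cancel]
    exact Icc_subset_Iic_self
  obtain ⟨ξ, hξ, hwξ⟩ := exists_nonpos_of_sturm hw hω (fun ξ hξ => (hR ξ (hIcc hξ)).1)
    fun ξ hξ => (hR ξ (hIcc hξ)).2.1
  exact hwξ.not_gt (hR ξ (hIcc hξ)).2.2

lemma not_eventually_pos_of_neg_speed {w Q : ℝ → ℝ} {s : ℝ} (hw : ContDiff ℝ 2 w) (hs : s < 0)
    (hQ : ∀ᶠ ξ in atBot, 0 < Q ξ)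
    (heq : ∀ᶠ ξ in atBot, deriv (deriv w) ξ - s * deriv w ξ + Q ξ * w ξ = 0)
    (hlim : Tendsto w atBot (𝓝 0)) :
    ¬ ∀ᶠ ξ in atBot, 0 < w ξ := by
  intro hpos
  obtain ⟨R, hR⟩ := eventually_atBot.mp (hQ.and (heq.and hpos))
  have hw₁ : Differentiable ℝ w := hw.differentiable two_ne_zero
  obtain ⟨ζ, hζR, hζ⟩ : ∃ ζ ≤ R, 0 < deriv w ζ := by
    by_contra! hnonpos
    have hanti : AntitoneOn w (Iic R) :=
      antitoneOn_of_deriv_nonpos (convex_Iic R) hw₁.continuous.continuousOn hw₁.differentiableOn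
        fun x hx => hnonpos x (interior_subset hx : x ∈ Iic R)
    have hge : w R ≤ 0 := ge_of_tendsto hlim
      (eventually_atBot.mpr ⟨R, fun ξ hξ => hanti hξ self_mem_Iic hξ⟩)
    exact hge.not_gt (hR R le_rfl).2.2
  have hmono : StrictAntiOn (fun t => exp (-(s * t)) * deriv w t) (Iic R) := by
    have hderiv (t : ℝ) : HasDerivAt (fun t => exp (-(s * t)) * deriv w t)
        (exp (-(s * t)) * (deriv (deriv w) t - s * deriv w t)) t := by
      have hexp : HasDerivAt (fun t => exp (-(s * t))) (-s * exp (-(s * t))) t := by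
        simpa [mul_comm] using ((hasDerivAt_id t).const_mul s).neg.exp
      exact (hexp.mul (hw.differentiable_deriv_two t).hasDerivAt).congr_deriv (by ring)
    refine strictAntiOn_of_hasDerivWithinAt_neg (convex_Iic R)
      (HasDerivAt.continuousOn fun t _ => hderiv t) (fun t _ => (hderiv t).hasDerivWithinAt)
      fun t ht => ?_
    obtain ⟨hQt, heqt, hwt⟩ := hR t (interior_subset ht : t ∈ Iic R)
    rw [show deriv (deriv w) t - s * deriv w t = -(Q t * w t) by linear_combination heqt]
    exact mul_neg_of_pos_of_neg (exp_pos _) (neg_neg_of_pos (mul_pos hQt hwt))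
  -- the weight `exp (-s t)` decreases as `t` decreases, so `w'` itself stays above `w' ζ`
  have hlower : ∀ t ∈ interior (Iic ζ), deriv w ζ ≤ deriv w t := by
    intro t ht
    have htζ : t ≤ ζ := (interior_subset ht : t ∈ Iic ζ)
    have hdecay := hmono.antitoneOn (htζ.trans hζR) hζR htζ
    have hexp : exp (-(s * t)) ≤ exp (-(s * ζ)) := exp_le_exp.mpr (by nlinarith)
    by_contra! hlt
    nlinarith [mul_lt_mul_of_pos_left hlt (exp_pos (-(s * t))),
      mul_le_mul_of_nonneg_right hexp hζ.le]
  set x := ζ - w ζ / deriv w ζ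
  have hxζ : x ≤ ζ := sub_le_self _ (div_nonneg (hR ζ hζR).2.2.le hζ.le)
  have hgrowth := (convex_Iic ζ).mul_sub_le_image_sub_of_le_deriv hw₁.continuous.continuousOn
    hw₁.differentiableOn hlower x hxζ ζ self_mem_Iic hxζ
  rw [sub_sub_cancel, mul_div_cancel₀ _ hζ.ne'] at hgrowth
  exact (hR x (hxζ.trans hζR)).2.2.not_ge (by linarith)

theorem no_wave_subcritical_general
    (a b c d : ℝ)
    (s : ℝ) (hs : s < max 2 (2 * Real.sqrt (a * d))) :
    ¬ ∃ u v : ℝ → ℝ, ContDiff ℝ 2 u ∧ ContDiff ℝ 2 v ∧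
      (∀ ξ : ℝ, 0 < u ξ) ∧ (∀ ξ : ℝ, 0 < v ξ) ∧
      (∀ ξ : ℝ, deriv (deriv u) ξ - s * deriv u ξ + u ξ * (1 - u ξ - c * v ξ) = 0) ∧
      (∀ ξ : ℝ, d * deriv (deriv v) ξ - s * deriv v ξ + v ξ * (a - b * u ξ - v ξ) = 0) ∧
      Tendsto u atBot (nhds 0) ∧ Tendsto v atBot (nhds 0) := by
  rintro ⟨u, v, hu, hv, hupos, hvpos, hueq, hveq, hulim, hvlim⟩
  rcases lt_or_ge s 2 with hs2 | hs2
  · have hQ : Tendsto (fun ξ => 1 - u ξ - c * v ξ) atBot (𝓝 1) := by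
      simpa using (tendsto_const_nhds.sub hulim).sub (hvlim.const_mul c)
    have heq : ∀ᶠ ξ in atBot,
        deriv (deriv u) ξ - s * deriv u ξ + (1 - u ξ - c * v ξ) * u ξ = 0 :=
      .of_forall fun ξ => by linear_combination hueq ξ
    rcases lt_or_ge s 0 with hs0 | hs0
    · exact not_eventually_pos_of_neg_speed hu hs0 (hQ.eventually_const_lt one_pos) heq hulim
        (.of_forall hupos)
    · exact not_eventually_pos_of_sq_lt hu (by nlinarith) hQ heq (.of_forall hupos)
  · have had : s / 2 < √(a * d) := by linarith [(lt_max_iff.mp hs).resolve_left hs2.not_gt]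
    have hsq : s ^ 2 < 4 * (a * d) := by
      have := (lt_sqrt (by linarith)).mp had
      linarith [div_pow s 2 2]
    have hd : d ≠ 0 := by
      rintro rfl
      nlinarith [sq_nonneg s]
    have hQ : Tendsto (fun ξ => (a - b * u ξ - v ξ) / d) atBot (𝓝 (a / d)) := by
      simpa using ((tendsto_const_nhds.sub (hulim.const_mul b)).sub hvlim).div_const d
    refine not_eventually_pos_of_sq_lt (s := s / d) hv ?_ hQ (.of_forall fun ξ => ?_)
      (.of_forall hvpos)
    · rw [div_pow, show 4 * (a / d) = 4 * (a * d) / d ^ 2 by field_simp]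
      exact div_lt_div_of_pos_right hsq (by positivity)
    · field_simp
      linear_combination hveq ξ

/-- Nonexistence of positive traveling waves for subcritical speeds `s < s*`
under strict or critical weak competition `b < a ≤ 1/c`. -/
theorem no_wave_subcritical
    (a b c d : ℝ) (ha : 0 < a) (hb : 0 < b) (hc : 0 < c) (hd : 0 < d)
    (hba : b < a) (hac : a ≤ 1 / c)
    (s : ℝ) (hs : s < max 2 (2 * Real.sqrt (a * d))) :
    ¬ ∃ u v : ℝ → ℝ, ContDiff ℝ 2 u ∧ ContDiff ℝ 2 v ∧
      (∀ ξ : ℝ, 0 < u ξ) ∧ (∀ ξ : ℝ, 0 < v ξ) ∧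
      (∀ ξ : ℝ, deriv (deriv u) ξ - s * deriv u ξ + u ξ * (1 - u ξ - c * v ξ) = 0) ∧
      (∀ ξ : ℝ, d * deriv (deriv v) ξ - s * deriv v ξ + v ξ * (a - b * u ξ - v ξ) = 0) ∧
      Tendsto u atBot (nhds 0) ∧ Tendsto v atBot (nhds 0) :=
  no_wave_subcritical_general a b c d s hs
end

section
/- Assume a, b, c, d > 0 and s ≤ 0. Then there exists no pair of twice continuously differentiable functions u, v : ℝ → ℝ with u(ξ) > 0 and v(ξ) > 0 for all ξ ∈ ℝ satisfying u'' − s·u' + u·(1 − u − c·v) = 0 and d·v'' − s·v' + v·(a − b·u − v) = 0 on ℝ together with lim_{ξ→−∞}(u(ξ), v(ξ)) = (0, 0). -/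
/-!
Near `-∞` both components are small, so the competition term `1 - u - c v` is nonnegative and
the `u`-equation gives `(e^{-sξ} u')' = -e^{-sξ} u (1 - u - c v) ≤ 0` there. Since `u > 0` and
`u → 0` at `-∞`, the mean value theorem yields a point `ξ₁` with `u'(ξ₁) > 0`; monotonicity of
`e^{-sξ} u'` together with `s ≤ 0` then gives `u' ≥ u'(ξ₁)` on `(-∞, ξ₁]`, so `u → -∞` at `-∞`,
contradicting `u → 0`.
-/

open Filter Real Set Topology

theorem exists_lt_deriv_pos_of_tendsto_atBot {f : ℝ → ℝ} {L x₀ : ℝ} (hf : Differentiable ℝ f)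
    (hlim : Tendsto f atBot (𝓝 L)) (hx₀ : L < f x₀) : ∃ ξ < x₀, 0 < deriv f ξ := by
  obtain ⟨η, hη, hfη⟩ := ((eventually_lt_atBot x₀).and (hlim.eventually_lt_const hx₀)).exists
  obtain ⟨ξ, hξ, hslope⟩ := exists_deriv_eq_slope f hη hf.continuous.continuousOn
    hf.differentiableOn
  exact ⟨ξ, hξ.2, hslope ▸ div_pos (sub_pos.2 hfη) (sub_pos.2 hη)⟩

theorem tendsto_atBot_of_le_deriv {f : ℝ → ℝ} {m x₀ : ℝ} (hf : Differentiable ℝ f) (hm : 0 < m)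
    (hderiv : ∀ x < x₀, m ≤ deriv f x) : Tendsto f atBot atBot := by
  have hline : Tendsto (fun x => m * x + (f x₀ - m * x₀)) atBot atBot :=
    tendsto_atBot_add_const_right _ _ (tendsto_id.const_mul_atBot hm)
  refine tendsto_atBot_mono' atBot ?_ hline
  filter_upwards [eventually_lt_atBot x₀] with x hx
  obtain ⟨ξ, hξ, hslope⟩ := exists_deriv_eq_slope f hx hf.continuous.continuousOn
    hf.differentiableOn
  have hmξ := hslope ▸ hderiv ξ hξ.2
  rw [le_div_iff₀ (sub_pos.2 hx)] at hmξ
  linarith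

theorem antitoneOn_exp_mul_deriv {u : ℝ → ℝ} {s : ℝ} {D : Set ℝ}
    (hu : Differentiable ℝ (deriv u)) (hD : Convex ℝ D)
    (hsub : ∀ x ∈ interior D, deriv (deriv u) x ≤ s * deriv u x) :
    AntitoneOn (fun x => exp (-s * x) * deriv u x) D := by
  have hφ : ∀ x, HasDerivAt (fun x => exp (-s * x) * deriv u x)
      (exp (-s * x) * (deriv (deriv u) x - s * deriv u x)) x := fun x =>
    (((hasDerivAt_id' x).const_mul (-s)).exp.mul (hu x).hasDerivAt).congr_deriv (by ring)
  refine antitoneOn_of_deriv_nonpos hD (fun x _ => (hφ x).continuousAt.continuousWithinAt)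
    (fun x _ => (hφ x).differentiableAt.differentiableWithinAt) fun x hx => ?_
  rw [(hφ x).deriv]
  exact mul_nonpos_of_nonneg_of_nonpos (exp_pos _).le (sub_nonpos.2 (hsub x hx))

theorem deriv_le_deriv_of_deriv_deriv_le {u : ℝ → ℝ} {s x₀ : ℝ} (hs : s ≤ 0)
    (hu : Differentiable ℝ (deriv u)) (hsub : ∀ x < x₀, deriv (deriv u) x ≤ s * deriv u x)
    (hx₀ : 0 ≤ deriv u x₀) {x : ℝ} (hx : x ≤ x₀) : deriv u x₀ ≤ deriv u x := by
  have hanti := antitoneOn_exp_mul_deriv hu (convex_Iic x₀)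
    (fun y hy => hsub y (by simpa using hy)) (mem_Iic.2 hx) self_mem_Iic hx
  have hexp : exp (-s * x) ≤ exp (-s * x₀) := exp_le_exp.2 (by nlinarith)
  have : exp (-s * x) * deriv u x₀ ≤ exp (-s * x) * deriv u x :=
    (mul_le_mul_of_nonneg_right hexp hx₀).trans hanti
  exact le_of_mul_le_mul_left this (exp_pos _)

theorem no_wave_nonpositive_speed_general
    (a b c d : ℝ)
    (s : ℝ) (hs : s ≤ 0) :
    ¬ ∃ u v : ℝ → ℝ, ContDiff ℝ 2 u ∧ ContDiff ℝ 2 v ∧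
      (∀ ξ : ℝ, 0 < u ξ) ∧ (∀ ξ : ℝ, 0 < v ξ) ∧
      (∀ ξ : ℝ, deriv (deriv u) ξ - s * deriv u ξ + u ξ * (1 - u ξ - c * v ξ) = 0) ∧
      (∀ ξ : ℝ, d * deriv (deriv v) ξ - s * deriv v ξ + v ξ * (a - b * u ξ - v ξ) = 0) ∧
      Tendsto u atBot (nhds 0) ∧ Tendsto v atBot (nhds 0) := by
  rintro ⟨u, v, hu, -, hupos, -, hueq, -, hulim, hvlim⟩
  have hud : Differentiable ℝ u := hu.differentiable (by norm_num)
  have hcomp : Tendsto (fun ξ => u ξ + c * v ξ) atBot (𝓝 0) := by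
    simpa using hulim.add (hvlim.const_mul c)
  obtain ⟨ξ₀, hξ₀⟩ := eventually_atBot.1 (hcomp.eventually_le_const zero_lt_one)
  have hsub : ∀ ξ ≤ ξ₀, deriv (deriv u) ξ ≤ s * deriv u ξ := fun ξ hξ => by
    nlinarith [hueq ξ, hξ₀ ξ hξ, hupos ξ]
  obtain ⟨ξ₁, hξ₁, hpos⟩ := exists_lt_deriv_pos_of_tendsto_atBot hud hulim (hupos ξ₀)
  have hmin : ∀ ξ < ξ₁, deriv u ξ₁ ≤ deriv u ξ := fun ξ hξ =>
    deriv_le_deriv_of_deriv_deriv_le hs hu.differentiable_deriv_two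
      (fun x hx => hsub x (by linarith)) hpos.le hξ.le
  exact not_tendsto_nhds_of_tendsto_atBot (tendsto_atBot_of_le_deriv hud hpos hmin) 0 hulim

/-- Nonexistence of positive traveling waves with nonpositive speed `s ≤ 0`. -/
theorem no_wave_nonpositive_speed
    (a b c d : ℝ) (ha : 0 < a) (hb : 0 < b) (hc : 0 < c) (hd : 0 < d)
    (s : ℝ) (hs : s ≤ 0) :
    ¬ ∃ u v : ℝ → ℝ, ContDiff ℝ 2 u ∧ ContDiff ℝ 2 v ∧
      (∀ ξ : ℝ, 0 < u ξ) ∧ (∀ ξ : ℝ, 0 < v ξ) ∧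
      (∀ ξ : ℝ, deriv (deriv u) ξ - s * deriv u ξ + u ξ * (1 - u ξ - c * v ξ) = 0) ∧
      (∀ ξ : ℝ, d * deriv (deriv v) ξ - s * deriv v ξ + v ξ * (a - b * u ξ - v ξ) = 0) ∧
      Tendsto u atBot (nhds 0) ∧ Tendsto v atBot (nhds 0) :=
  no_wave_nonpositive_speed_general a b c d s hs
end

section
/- Assume a, b, c, d > 0 and 0 < s < 2. Then there exists no pair of twice continuously differentiable functions u, v : ℝ → ℝ with u(ξ) > 0 and v(ξ) > 0 for all ξ ∈ ℝ satisfying u'' − s·u' + u·(1 − u − c·v) = 0 and d·v'' − s·v' + v·(a − b·u − v) = 0 on ℝ together with lim_{ξ→−∞}(u(ξ), v(ξ)) = (0, 0). -/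
/-!
Put `k = 1 - s²/4 > 0`. The substitution `w = e^{-sξ/2} u` removes the first-order term of the
`u`-equation: `w'' = (s²/4 - 1 + u + c v) w`. Since `u + c v → 0` at `-∞`, on some half-line
`(-∞, T]` this gives `w'' ≤ -(k/2) w`, and no positive function satisfies such an inequality on a
half-line: it is concave, hence nonincreasing there, so `w'' ≤ -(k/2) w(T) < 0` and `w'` would
become positive far to the left.
-/

open Filter Real Set

section HalfLine

variable {f f' : ℝ → ℝ} {b : ℝ}

theorem antitoneOn_Iic_of_hasDerivAt_nonpos (hf : ∀ x ≤ b, HasDerivAt f (f' x) x)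
    (hf' : ∀ x ≤ b, f' x ≤ 0) : AntitoneOn f (Iic b) :=
  antitoneOn_of_hasDerivWithinAt_nonpos (convex_Iic b)
    (fun x hx => (hf x hx).continuousAt.continuousWithinAt)
    (fun x hx => (hf x (mem_Iic.1 (interior_subset hx))).hasDerivWithinAt)
    (fun x hx => hf' x (mem_Iic.1 (interior_subset hx)))

theorem exists_pos_of_hasDerivAt_le_neg {m : ℝ} (hm : 0 < m)
    (hf : ∀ x ≤ b, HasDerivAt f (f' x) x) (hf' : ∀ x ≤ b, f' x ≤ -m) :
    ∃ x ≤ b, 0 < f x := by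
  have hanti : AntitoneOn (fun x => f x + m * x) (Iic b) :=
    antitoneOn_Iic_of_hasDerivAt_nonpos
      (fun x hx => (hf x hx).add ((hasDerivAt_id x).const_mul m))
      (fun x hx => by linarith [hf' x hx])
  set x := b - (|f b| + 1) / m
  have hxb : x ≤ b := sub_le_self _ (by positivity)
  have hfx : f b + m * b ≤ f x + m * x := hanti hxb (mem_Iic.2 le_rfl) hxb
  have hmx : m * x = m * b - (|f b| + 1) := by
    simp only [x]
    field_simp
  refine ⟨x, hxb, ?_⟩
  linarith [neg_abs_le (f b)]

theorem exists_nonpos_of_hasDerivAt_le_neg_mul {w w' w'' : ℝ → ℝ} {ε : ℝ} (hε : 0 < ε)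
    (hw : ∀ x ≤ b, HasDerivAt w (w' x) x) (hw' : ∀ x ≤ b, HasDerivAt w' (w'' x) x)
    (hle : ∀ x ≤ b, w'' x ≤ -ε * w x) : ∃ x ≤ b, w x ≤ 0 := by
  by_contra! hpos
  have hw'_anti : AntitoneOn w' (Iic b) :=
    antitoneOn_Iic_of_hasDerivAt_nonpos hw' fun x hx => by
      nlinarith [hle x hx, hpos x hx]
  have hw'_nonpos : ∀ x ≤ b, w' x ≤ 0 := by
    intro x₀ hx₀
    by_contra! hw'x₀
    obtain ⟨x, hx, hwx⟩ := exists_pos_of_hasDerivAt_le_neg (f := -w) (b := x₀) hw'x₀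
      (fun x hx => (hw x (hx.trans hx₀)).neg)
      (fun x hx => neg_le_neg (hw'_anti (hx.trans hx₀) hx₀ hx))
    exact (hpos x (hx.trans hx₀)).not_gt (neg_pos.1 hwx)
  have hw_anti : AntitoneOn w (Iic b) := antitoneOn_Iic_of_hasDerivAt_nonpos hw hw'_nonpos
  obtain ⟨x, hx, hw'x⟩ := exists_pos_of_hasDerivAt_le_neg (mul_pos hε (hpos b le_rfl)) hw'
    fun x hx => by nlinarith [hle x hx, hw_anti hx (mem_Iic.2 le_rfl) hx]
  linarith [hw'_nonpos x hx]

end HalfLine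

theorem exists_hasDerivAt_exp_mul_of_ode {u u' u'' q : ℝ → ℝ} {s : ℝ}
    (hu : ∀ x, HasDerivAt u (u' x) x) (hu' : ∀ x, HasDerivAt u' (u'' x) x)
    (hode : ∀ x, u'' x - s * u' x + q x * u x = 0) :
    ∃ w' : ℝ → ℝ, (∀ x, HasDerivAt (fun y => exp (-(s / 2) * y) * u y) (w' x) x) ∧
      ∀ x, HasDerivAt w' ((s ^ 2 / 4 - q x) * (exp (-(s / 2) * x) * u x)) x := by
  have he : ∀ x, HasDerivAt (fun y => exp (-(s / 2) * y)) (exp (-(s / 2) * x) * (-(s / 2))) x :=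
    fun x => by simpa using ((hasDerivAt_id x).const_mul (-(s / 2))).exp
  refine ⟨fun x => exp (-(s / 2) * x) * (u' x - s / 2 * u x), fun x => ?_, fun x => ?_⟩
  · exact ((he x).fun_mul (hu x)).congr_deriv (by ring)
  · refine ((he x).fun_mul ((hu' x).fun_sub ((hu x).const_mul (s / 2)))).congr_deriv ?_
    rw [show u'' x = s * u' x - q x * u x by linarith [hode x]]
    ring

theorem no_wave_speed_below_two_general
    (a b c d : ℝ)
    (s : ℝ) (hs0 : 0 < s) (hs2 : s < 2) :
    ¬ ∃ u v : ℝ → ℝ, ContDiff ℝ 2 u ∧ ContDiff ℝ 2 v ∧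
      (∀ ξ : ℝ, 0 < u ξ) ∧ (∀ ξ : ℝ, 0 < v ξ) ∧
      (∀ ξ : ℝ, deriv (deriv u) ξ - s * deriv u ξ + u ξ * (1 - u ξ - c * v ξ) = 0) ∧
      (∀ ξ : ℝ, d * deriv (deriv v) ξ - s * deriv v ξ + v ξ * (a - b * u ξ - v ξ) = 0) ∧
      Tendsto u atBot (nhds 0) ∧ Tendsto v atBot (nhds 0) := by
  rintro ⟨u, v, hu, -, hu_pos, -, hu_eq, -, hu_lim, hv_lim⟩
  have hk : 0 < 1 - s ^ 2 / 4 := by nlinarith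
  have hlim : Tendsto (fun ξ => u ξ + c * v ξ) atBot (nhds 0) := by
    simpa using hu_lim.add (hv_lim.const_mul c)
  obtain ⟨T, hT⟩ := eventually_atBot.mp (hlim.eventually (eventually_lt_nhds (half_pos hk)))
  obtain ⟨w', hw, hw'⟩ := exists_hasDerivAt_exp_mul_of_ode (q := fun ξ => 1 - u ξ - c * v ξ)
    (fun ξ => (hu.differentiable two_ne_zero ξ).hasDerivAt)
    (fun ξ => (hu.differentiable_deriv_two ξ).hasDerivAt)
    (fun ξ => by linarith [hu_eq ξ])
  obtain ⟨ξ, -, hξ⟩ := exists_nonpos_of_hasDerivAt_le_neg_mul (half_pos hk)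
    (fun ξ _ => hw ξ) (fun ξ _ => hw' ξ) fun ξ hξ =>
      mul_le_mul_of_nonneg_right (by linarith [hT ξ hξ])
        (mul_pos (exp_pos _) (hu_pos ξ)).le
  exact hξ.not_gt (mul_pos (exp_pos _) (hu_pos ξ))

/-- Nonexistence of positive traveling waves for speeds `0 < s < 2`
(Sturm comparison argument on the `u`-equation). -/
theorem no_wave_speed_below_two
    (a b c d : ℝ) (ha : 0 < a) (hb : 0 < b) (hc : 0 < c) (hd : 0 < d)
    (s : ℝ) (hs0 : 0 < s) (hs2 : s < 2) :
    ¬ ∃ u v : ℝ → ℝ, ContDiff ℝ 2 u ∧ ContDiff ℝ 2 v ∧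
      (∀ ξ : ℝ, 0 < u ξ) ∧ (∀ ξ : ℝ, 0 < v ξ) ∧
      (∀ ξ : ℝ, deriv (deriv u) ξ - s * deriv u ξ + u ξ * (1 - u ξ - c * v ξ) = 0) ∧
      (∀ ξ : ℝ, d * deriv (deriv v) ξ - s * deriv v ξ + v ξ * (a - b * u ξ - v ξ) = 0) ∧
      Tendsto u atBot (nhds 0) ∧ Tendsto v atBot (nhds 0) :=
  no_wave_speed_below_two_general a b c d s hs0 hs2
end

section
/- Assume d > 0, strict weak competition 0 < b < a < 1/c, and let s ∈ ℝ. Let (u, v) be a pair of twice continuously differentiable functions solving u'' − s·u' + u·(1 − u − c·v) = 0 and d·v'' − s·v' + v·(a − b·u − v) = 0 on ℝ, and suppose there exist constants δ₁, δ₂ > 0 such that δ₁ ≤ u(ξ) ≤ 1 and δ₂ ≤ v(ξ) ≤ a for all ξ ≥ 0. Then lim_{ξ→+∞}(u(ξ), v(ξ)) = (u*, v*). -/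
/-!
Write `Lu, lu` for the limsup and liminf of `u` at `+∞`, and `Lv, lv` for those of `v`. Near
points where `u` almost attains `Lu`, `u'` is small and `u''` is at most slightly positive, so the
equation forces `1 - c v - u` to be almost nonnegative there; as `u ≥ δ₁ > 0` this gives
`Lu ≤ 1 - c lv`. The same argument at almost-minima, and for `v`, gives the shrinking-box
inequalities `1 - c Lv ≤ lu`, `Lv ≤ a - b lu`, `a - b Lu ≤ lv`. Since `b c < 1` they force
`lu = Lu = u*` and `lv = Lv = v*`.
-/

open Filter Set Topology

/-- If `f'' x > 0`, the second-derivative test makes `x` a local minimum as well, so `f` is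
locally constant at `x`. -/
theorem IsLocalMax.deriv_deriv_nonpos {f : ℝ → ℝ} {x : ℝ} (h : IsLocalMax f x)
    (hc : ContinuousAt f x) : deriv (deriv f) x ≤ 0 := by
  by_contra! hpos
  have hconst : f =ᶠ[𝓝 x] fun _ => f x :=
    ((isLocalMin_of_deriv_deriv_pos hpos h.deriv_eq_zero hc).and h).mono
      fun _ hy => le_antisymm hy.2 hy.1
  exact hpos.ne' (by simp [hconst.deriv.deriv_eq])

theorem frequently_approx_limsup_deriv_small {w : ℝ → ℝ} (hw : Differentiable ℝ w)
    (hw' : Differentiable ℝ (deriv w)) (hle : IsBoundedUnder (· ≤ ·) atTop w)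
    (hge : IsBoundedUnder (· ≥ ·) atTop w) {ε : ℝ} (hε : 0 < ε) :
    ∃ᶠ ξ in atTop, limsup w atTop - ε < w ξ ∧ |deriv w ξ| ≤ ε ∧ deriv (deriv w) ξ ≤ ε := by
  set L := limsup w atTop
  set η := ε / 3 with hη_eq
  have hη : 0 < η := by positivity
  refine frequently_atTop.2 fun N => ?_
  obtain ⟨T, hT⟩ := eventually_atTop.mp
    (eventually_lt_of_limsup_lt (lt_add_of_pos_right L hη) hle)
  set T' := max T N
  obtain ⟨ξ₁, hwξ₁, hξ₁⟩ :=
    ((frequently_lt_of_lt_limsup hge.isCoboundedUnder_le (sub_lt_self L hη)).and_eventually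
      (eventually_ge_atTop (T' + 2))).exists
  -- Both endpoints of `[T', ξ₁ + 2]` lose to `ξ₁`, so `φ` has an interior maximum there,
  -- and it lies within `√2` of `ξ₁` because `w < L + η` beyond `T`.
  set φ : ℝ → ℝ := fun ξ => w ξ - η * (ξ - ξ₁) ^ 2
  have hφ_cont : Continuous φ := hw.continuous.sub (by fun_prop)
  have hφ_deriv : deriv φ = fun ξ => deriv w ξ - 2 * η * (ξ - ξ₁) := by
    ext ξ
    have : HasDerivAt φ (deriv w ξ - η * (2 * (ξ - ξ₁))) ξ := by
      refine (hw ξ).hasDerivAt.sub (HasDerivAt.const_mul η ?_)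
      simpa using ((hasDerivAt_id ξ).sub_const ξ₁).fun_pow 2
    rw [this.deriv]; ring
  have hφ_deriv2 : deriv (deriv φ) = fun ξ => deriv (deriv w) ξ - 2 * η := by
    ext ξ
    have : HasDerivAt (deriv φ) (deriv (deriv w) ξ - 2 * η * 1) ξ := by
      rw [hφ_deriv]
      exact (hw' ξ).hasDerivAt.sub (((hasDerivAt_id ξ).sub_const ξ₁).const_mul _)
    rw [this.deriv, mul_one]
  obtain ⟨ξ₀, hξ₀, hmax⟩ := isCompact_Icc.exists_isMaxOn
    (nonempty_Icc.mpr (by linarith : T' ≤ ξ₁ + 2)) hφ_cont.continuousOn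
  have hφ₁ : φ ξ₁ ≤ φ ξ₀ := hmax ⟨by linarith, by linarith⟩
  have hleft : φ T' < φ ξ₁ := by
    have hfar : η * 4 ≤ η * (T' - ξ₁) ^ 2 :=
      mul_le_mul_of_nonneg_left (by nlinarith) hη.le
    have := hT T' (le_max_left _ _)
    simp only [φ, sub_self]
    linarith
  have hright : φ (ξ₁ + 2) < φ ξ₁ := by
    have := hT (ξ₁ + 2) (by linarith [le_max_left T N])
    simp only [φ]
    nlinarith
  have hlt_left : T' < ξ₀ := lt_of_le_of_ne hξ₀.1 (by rintro rfl; linarith)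
  have hlt_right : ξ₀ < ξ₁ + 2 := lt_of_le_of_ne hξ₀.2 (by rintro rfl; linarith)
  have hloc : IsLocalMax φ ξ₀ := hmax.isLocalMax (Icc_mem_nhds hlt_left hlt_right)
  have hwξ₀ : w ξ₀ < L + η := hT ξ₀ (by linarith [le_max_left T N])
  have hclose : |ξ₀ - ξ₁| < 3 / 2 := by
    have : η * (ξ₀ - ξ₁) ^ 2 < η * 2 := by simp only [φ] at hφ₁; linarith
    have := lt_of_mul_lt_mul_left this hη.le
    exact abs_lt.mpr ⟨by nlinarith, by nlinarith⟩
  have hd1 : deriv w ξ₀ = 2 * η * (ξ₀ - ξ₁) := by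
    have := hloc.deriv_eq_zero
    rw [hφ_deriv] at this
    linarith
  have hd2 : deriv (deriv w) ξ₀ ≤ 2 * η := by
    have := hloc.deriv_deriv_nonpos hφ_cont.continuousAt
    rw [hφ_deriv2] at this
    linarith
  refine ⟨ξ₀, by linarith [le_max_right T N], ?_, ?_, by linarith⟩
  · simp only [φ] at hφ₁; nlinarith
  · rw [hd1, abs_mul, abs_of_pos (by positivity : 0 < 2 * η)]
    nlinarith

theorem frequently_approx_liminf_deriv_small {w : ℝ → ℝ} (hw : Differentiable ℝ w)
    (hw' : Differentiable ℝ (deriv w)) (hle : IsBoundedUnder (· ≤ ·) atTop w)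
    (hge : IsBoundedUnder (· ≥ ·) atTop w) {ε : ℝ} (hε : 0 < ε) :
    ∃ᶠ ξ in atTop, w ξ < liminf w atTop + ε ∧ |deriv w ξ| ≤ ε ∧ -ε ≤ deriv (deriv w) ξ := by
  have hanti : Antitone (fun x : ℝ => -x) := fun _ _ h => neg_le_neg h
  have hlimsup : limsup (fun ξ => -w ξ) atTop = -liminf w atTop :=
    (hanti.map_liminf_of_continuousAt w continuous_neg.continuousAt
      hle.isCoboundedUnder_ge hge).symm
  have := frequently_approx_limsup_deriv_small (w := fun ξ => -w ξ) hw.neg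
    (by simpa using hw'.neg) (hanti.isBoundedUnder_le_comp hge)
    (hanti.isBoundedUnder_ge_comp hle) hε
  refine this.mono fun ξ hξ => ?_
  simp only [hlimsup, deriv.fun_neg', abs_neg] at hξ
  exact ⟨by linarith [hξ.1], hξ.2.1, by linarith [hξ.2.2]⟩

theorem mul_le_of_le_of_mul_le {x y δ η : ℝ} (hδ : 0 ≤ δ) (hx : δ ≤ x) (hη : 0 ≤ η)
    (h : x * y ≤ η) : δ * y ≤ η := by
  rcases le_or_gt y 0 with hy | hy
  · exact (mul_nonpos_of_nonneg_of_nonpos hδ hy).trans hη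
  · exact (mul_le_mul_of_nonneg_right hx hy.le).trans h

theorem nonpos_of_forall_pos_le_mul {x K : ℝ} (h : ∀ ε > 0, x ≤ K * ε) : x ≤ 0 := by
  have : Tendsto (fun ε => K * ε) (𝓝[>] 0) (𝓝 0) := by
    simpa using ((tendsto_id (x := 𝓝 (0:ℝ))).const_mul K).mono_left nhdsWithin_le_nhds
  exact ge_of_tendsto this (eventually_nhdsWithin_of_forall h)

theorem limsup_le_limsup_of_logistic {w g : ℝ → ℝ} {d₀ s δ : ℝ} (hd₀ : 0 ≤ d₀) (hδ : 0 < δ)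
    (hw : Differentiable ℝ w) (hw' : Differentiable ℝ (deriv w))
    (hwδ : ∀ᶠ ξ in atTop, δ ≤ w ξ) (hw_le : IsBoundedUnder (· ≤ ·) atTop w)
    (hg : IsBoundedUnder (· ≤ ·) atTop g)
    (heq : ∀ ξ, d₀ * deriv (deriv w) ξ - s * deriv w ξ + w ξ * (g ξ - w ξ) = 0) :
    limsup w atTop ≤ limsup g atTop := by
  set L := limsup w atTop
  set G := limsup g atTop
  suffices key : ∀ ε > 0, δ * (L - G) ≤ (2 * δ + d₀ + |s|) * ε by
    have := nonpos_of_mul_nonpos_right (nonpos_of_forall_pos_le_mul key) hδ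
    linarith
  intro ε hε
  obtain ⟨ξ, ⟨hwL, hd1, hd2⟩, hgG, hwξ⟩ :=
    ((frequently_approx_limsup_deriv_small hw hw' hw_le
      (isBoundedUnder_of_eventually_ge hwδ) hε).and_eventually
      ((eventually_lt_of_limsup_lt (lt_add_of_pos_right G hε) hg).and hwδ)).exists
  have hreact : w ξ * (w ξ - g ξ) ≤ (d₀ + |s|) * ε := by
    have h1 : d₀ * deriv (deriv w) ξ ≤ d₀ * ε := mul_le_mul_of_nonneg_left hd2 hd₀
    have h2 : -(s * deriv w ξ) ≤ |s| * ε :=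
      calc -(s * deriv w ξ) ≤ |s * deriv w ξ| := neg_le_abs _
        _ ≤ |s| * ε := by rw [abs_mul]; exact mul_le_mul_of_nonneg_left hd1 (abs_nonneg s)
    linarith [heq ξ]
  have := mul_le_of_le_of_mul_le hδ.le hwξ (by positivity) hreact
  nlinarith

theorem le_liminf_of_logistic {w g : ℝ → ℝ} {d₀ s δ : ℝ} (hd₀ : 0 ≤ d₀) (hδ : 0 < δ)
    (hw : Differentiable ℝ w) (hw' : Differentiable ℝ (deriv w))
    (hwδ : ∀ᶠ ξ in atTop, δ ≤ w ξ) (hw_le : IsBoundedUnder (· ≤ ·) atTop w)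
    (hg : IsBoundedUnder (· ≥ ·) atTop g)
    (heq : ∀ ξ, d₀ * deriv (deriv w) ξ - s * deriv w ξ + w ξ * (g ξ - w ξ) = 0) :
    liminf g atTop ≤ liminf w atTop := by
  set l := liminf w atTop
  set G := liminf g atTop
  suffices key : ∀ ε > 0, δ * (G - l) ≤ (2 * δ + d₀ + |s|) * ε by
    have := nonpos_of_mul_nonpos_right (nonpos_of_forall_pos_le_mul key) hδ
    linarith
  intro ε hε
  obtain ⟨ξ, ⟨hwl, hd1, hd2⟩, hgG, hwξ⟩ :=
    ((frequently_approx_liminf_deriv_small hw hw' hw_le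
      (isBoundedUnder_of_eventually_ge hwδ) hε).and_eventually
      ((eventually_lt_of_lt_liminf (sub_lt_self G hε) hg).and hwδ)).exists
  have hreact : w ξ * (g ξ - w ξ) ≤ (d₀ + |s|) * ε := by
    have h1 : d₀ * -ε ≤ d₀ * deriv (deriv w) ξ := mul_le_mul_of_nonneg_left hd2 hd₀
    have h2 : s * deriv w ξ ≤ |s| * ε :=
      calc s * deriv w ξ ≤ |s * deriv w ξ| := le_abs_self _
        _ ≤ |s| * ε := by rw [abs_mul]; exact mul_le_mul_of_nonneg_left hd1 (abs_nonneg s)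
    linarith [heq ξ]
  have := mul_le_of_le_of_mul_le hδ.le hwξ (by positivity) hreact
  nlinarith

theorem limsup_le_and_le_liminf_of_competition {w z : ℝ → ℝ} {d₀ s A k δ : ℝ} (hd₀ : 0 ≤ d₀)
    (hk : 0 ≤ k) (hδ : 0 < δ) (hw : Differentiable ℝ w) (hw' : Differentiable ℝ (deriv w))
    (hwδ : ∀ᶠ ξ in atTop, δ ≤ w ξ) (hw_le : IsBoundedUnder (· ≤ ·) atTop w)
    (hz_le : IsBoundedUnder (· ≤ ·) atTop z) (hz_ge : IsBoundedUnder (· ≥ ·) atTop z)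
    (heq : ∀ ξ, d₀ * deriv (deriv w) ξ - s * deriv w ξ + w ξ * (A - k * z ξ - w ξ) = 0) :
    limsup w atTop ≤ A - k * liminf z atTop ∧ A - k * limsup z atTop ≤ liminf w atTop := by
  have hanti : Antitone fun x => A - k * x :=
    fun _ _ h => sub_le_sub_left (mul_le_mul_of_nonneg_left h hk) A
  have hcont : Continuous fun x => A - k * x := by fun_prop
  constructor
  · calc limsup w atTop ≤ limsup (fun ξ => A - k * z ξ) atTop :=
          limsup_le_limsup_of_logistic hd₀ hδ hw hw' hwδ hw_le
            (hanti.isBoundedUnder_le_comp hz_ge) heq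
      _ = A - k * liminf z atTop :=
          (hanti.map_liminf_of_continuousAt z hcont.continuousAt
            hz_le.isCoboundedUnder_ge hz_ge).symm
  · calc A - k * limsup z atTop = liminf (fun ξ => A - k * z ξ) atTop :=
          hanti.map_limsup_of_continuousAt z hcont.continuousAt hz_le hz_ge.isCoboundedUnder_le
      _ ≤ liminf w atTop :=
          le_liminf_of_logistic hd₀ hδ hw hw' hwδ hw_le (hanti.isBoundedUnder_ge_comp hz_le) heq

theorem coexistence_bounds_of_box {a b c Lu lu Lv lv : ℝ} (hb : 0 ≤ b) (hc : 0 ≤ c)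
    (hbc : b * c < 1) (h₁ : Lu ≤ 1 - c * lv) (h₂ : 1 - c * Lv ≤ lu) (h₃ : Lv ≤ a - b * lu)
    (h₄ : a - b * Lu ≤ lv) :
    ((1 - a * c) / (1 - b * c) ≤ lu ∧ Lu ≤ (1 - a * c) / (1 - b * c)) ∧
      ((a - b) / (1 - b * c) ≤ lv ∧ Lv ≤ (a - b) / (1 - b * c)) := by
  have hbc' : 0 < 1 - b * c := by linarith
  have hlu : (1 - a * c) / (1 - b * c) ≤ lu := by
    rw [div_le_iff₀ hbc']; nlinarith [mul_le_mul_of_nonneg_left h₃ hc]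
  have hLu : Lu ≤ (1 - a * c) / (1 - b * c) := by
    rw [le_div_iff₀ hbc']; nlinarith [mul_le_mul_of_nonneg_left h₄ hc]
  have hv : a - b * ((1 - a * c) / (1 - b * c)) = (a - b) / (1 - b * c) := by
    field_simp; ring
  rw [← hv]
  exact ⟨⟨hlu, hLu⟩, by nlinarith [mul_le_mul_of_nonneg_left hLu hb],
    by nlinarith [mul_le_mul_of_nonneg_left hlu hb]⟩

/-- Shrinking-box argument: a solution of the traveling-wave system whose
components are uniformly bounded away from `0` (and bounded above by `1`,
resp. `a`) on `[0, ∞)` converges to the coexistence equilibrium at `+∞`. -/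
theorem tendsto_coexistence_of_bounds
    (a b c d : ℝ) (hd : 0 < d) (hb : 0 < b) (hba : b < a) (hc : 0 < c)
    (hac : a < 1 / c) (s : ℝ)
    (u v : ℝ → ℝ) (hu : ContDiff ℝ 2 u) (hv : ContDiff ℝ 2 v)
    (hueq : ∀ ξ : ℝ, deriv (deriv u) ξ - s * deriv u ξ + u ξ * (1 - u ξ - c * v ξ) = 0)
    (hveq : ∀ ξ : ℝ, d * deriv (deriv v) ξ - s * deriv v ξ + v ξ * (a - b * u ξ - v ξ) = 0)
    (δ₁ δ₂ : ℝ) (hδ₁ : 0 < δ₁) (hδ₂ : 0 < δ₂)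
    (hub : ∀ ξ : ℝ, 0 ≤ ξ → δ₁ ≤ u ξ ∧ u ξ ≤ 1)
    (hvb : ∀ ξ : ℝ, 0 ≤ ξ → δ₂ ≤ v ξ ∧ v ξ ≤ a) :
    Tendsto u atTop (nhds ((1 - a * c) / (1 - b * c))) ∧
    Tendsto v atTop (nhds ((a - b) / (1 - b * c))) := by
  have hu_ge : ∀ᶠ ξ in atTop, δ₁ ≤ u ξ := eventually_atTop.2 ⟨0, fun ξ hξ => (hub ξ hξ).1⟩
  have hv_ge : ∀ᶠ ξ in atTop, δ₂ ≤ v ξ := eventually_atTop.2 ⟨0, fun ξ hξ => (hvb ξ hξ).1⟩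
  have bu_le : IsBoundedUnder (· ≤ ·) atTop u :=
    isBoundedUnder_of_eventually_le (eventually_atTop.2 ⟨0, fun ξ hξ => (hub ξ hξ).2⟩)
  have bv_le : IsBoundedUnder (· ≤ ·) atTop v :=
    isBoundedUnder_of_eventually_le (eventually_atTop.2 ⟨0, fun ξ hξ => (hvb ξ hξ).2⟩)
  have bu_ge := isBoundedUnder_of_eventually_ge hu_ge
  have bv_ge := isBoundedUnder_of_eventually_ge hv_ge
  obtain ⟨hLu, hlu⟩ := limsup_le_and_le_liminf_of_competition (s := s) (A := 1) zero_le_one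
    hc.le hδ₁ (hu.differentiable two_ne_zero) hu.differentiable_deriv_two hu_ge bu_le bv_le bv_ge
    (fun ξ => by linear_combination hueq ξ)
  obtain ⟨hLv, hlv⟩ := limsup_le_and_le_liminf_of_competition hd.le hb.le hδ₂
    (hv.differentiable two_ne_zero) hv.differentiable_deriv_two hv_ge bv_le bu_le bu_ge hveq
  have hbc : b * c < 1 := by nlinarith [(lt_div_iff₀ hc).1 hac]
  obtain ⟨⟨hu₁, hu₂⟩, hv₁, hv₂⟩ := coexistence_bounds_of_box hb.le hc.le hbc hLu hlu hLv hlv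
  exact ⟨tendsto_of_le_liminf_of_limsup_le hu₁ hu₂ bu_le bu_ge,
    tendsto_of_le_liminf_of_limsup_le hv₁ hv₂ bv_le bv_ge⟩
end

section
/- Fix d > 0, s ∈ ℝ, a > b > 0, and M > 0. Then there exists a constant C > 0, depending only on M, s, d, a, b (and in particular independent of c), such that for every c with 0 < c < 1/a and every pair (u, v) of twice continuously differentiable functions solving u'' − s·u' + u·(1 − u − c·v) = 0 and d·v'' − s·v' + v·(a − b·u − v) = 0 on ℝ with 0 < u(ξ) < 1 and 0 < v(ξ) < a for all ξ ∈ ℝ, the functions u and v are three times differentiable on ℝ and for every ξ ∈ [−M, M] and every k ∈ {1, 2, 3} one has |u^{(k)}(ξ)| ≤ C and |v^{(k)}(ξ)| ≤ C. -/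
/-!
Both equations have the form `f'' = σ f' - h` with `f` and `h` bounded independently of `c`:
the only `c`-dependence is through `c v`, which lies in `(0, 1)` because `c < 1 / a`.
For such an equation the mean value theorem gives `η ∈ (ξ, ξ + 1)` with `|f' η| ≤ 2 sup |f|`,
and the mean value inequality for `e^{-σ(x-ξ)} f'`, whose derivative is `-e^{-σ(x-ξ)} h`,
carries this bound back to `ξ`. The equation then bounds `f''`, and its derivative bounds `f'''`
in terms of `f'`, `f''` and `c` times the first derivative of the other component.
The estimates obtained this way hold on all of `ℝ`.
-/

open Real Set

noncomputable def firstDerivBound (σ B K : ℝ) : ℝ := exp |σ| * (2 * B + K)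

noncomputable def derivBound (σ B K K' : ℝ) : ℝ :=
  max (firstDerivBound σ B K)
    (max (|σ| * firstDerivBound σ B K + K) (|σ| * (|σ| * firstDerivBound σ B K + K) + K'))

section SecondOrderODE

variable {f h h' : ℝ → ℝ} {σ B K K' : ℝ}

theorem abs_deriv_le_of_deriv_deriv_eq (hf : Differentiable ℝ f)
    (hf' : Differentiable ℝ (deriv f)) (hode : ∀ x, deriv (deriv f) x = σ * deriv f x - h x)
    (hfB : ∀ x, |f x| ≤ B) (hhK : ∀ x, |h x| ≤ K) (ξ : ℝ) :
    |deriv f ξ| ≤ firstDerivBound σ B K := by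
  obtain ⟨η, ⟨hξη, hη⟩, hslope⟩ :=
    exists_deriv_eq_slope f (lt_add_one ξ) hf.continuous.continuousOn hf.differentiableOn
  have hfη : |deriv f η| ≤ 2 * B := by
    rw [hslope, add_sub_cancel_left, div_one]
    linarith [abs_sub (f (ξ + 1)) (f ξ), hfB (ξ + 1), hfB ξ]
  set q : ℝ → ℝ := fun x => exp (-(σ * (x - ξ))) * deriv f x
  have hq : ∀ x, HasDerivAt q (-(exp (-(σ * (x - ξ))) * h x)) x := by
    intro x
    have hexp : HasDerivAt (fun x => exp (-(σ * (x - ξ)))) (exp (-(σ * (x - ξ))) * -(σ * 1)) x :=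
      (((hasDerivAt_id x).sub_const ξ).const_mul σ).neg.exp
    exact (hexp.mul (hf' x).hasDerivAt).congr_deriv (by rw [hode]; ring)
  have hweight : ∀ x ∈ Icc ξ (ξ + 1), exp (-(σ * (x - ξ))) ≤ exp |σ| := by
    rintro x ⟨hx₁, hx₂⟩
    refine exp_le_exp.mpr ?_
    have : |x - ξ| ≤ 1 := abs_le.mpr ⟨by linarith, by linarith⟩
    calc -(σ * (x - ξ)) ≤ |σ| * |x - ξ| := by rw [← abs_mul]; exact neg_le_abs _
      _ ≤ |σ| := mul_le_of_le_one_right (abs_nonneg σ) this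
  have hK : 0 ≤ K := (abs_nonneg _).trans (hhK ξ)
  have hqη : |q η - q ξ| ≤ exp |σ| * K := by
    have := norm_image_sub_le_of_norm_deriv_le_segment' (f := q) (C := exp |σ| * K)
      (fun x _ => (hq x).hasDerivWithinAt) (fun x hx => ?_) η ⟨hξη.le, le_rfl⟩
    · rw [Real.norm_eq_abs] at this
      calc |q η - q ξ| ≤ exp |σ| * K * (η - ξ) := this
        _ ≤ exp |σ| * K := mul_le_of_le_one_right (by positivity) (by linarith)
    · rw [norm_neg, norm_mul, Real.norm_eq_abs, Real.norm_eq_abs, abs_exp]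
      exact mul_le_mul (hweight x ⟨hx.1, by linarith [hx.2]⟩) (hhK x) (abs_nonneg _) (exp_pos _).le
  have hqξ : q ξ = deriv f ξ := by simp [q]
  have hqη' : |q η| ≤ exp |σ| * (2 * B) := by
    rw [abs_mul, abs_exp]
    exact mul_le_mul (hweight η ⟨hξη.le, hη.le⟩) hfη (abs_nonneg _) (exp_pos _).le
  calc |deriv f ξ| = |q η - (q η - q ξ)| := by rw [sub_sub_cancel, hqξ]
    _ ≤ |q η| + |q η - q ξ| := abs_sub _ _
    _ ≤ exp |σ| * (2 * B + K) := by linarith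

theorem abs_mul_sub_le_of_le {σ p q P Q : ℝ} (hp : |p| ≤ P) (hq : |q| ≤ Q) :
    |σ * p - q| ≤ |σ| * P + Q :=
  (abs_sub _ _).trans (add_le_add (by rw [abs_mul]; gcongr) hq)

theorem iteratedDeriv_bounds_of_deriv_deriv_eq (hf : Differentiable ℝ f)
    (hf' : Differentiable ℝ (deriv f)) (hode : ∀ x, deriv (deriv f) x = σ * deriv f x - h x)
    (hh : ∀ x, HasDerivAt h (h' x) x) (hfB : ∀ x, |f x| ≤ B) (hhK : ∀ x, |h x| ≤ K)
    (hh'K' : ∀ x, |h' x| ≤ K') :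
    Differentiable ℝ (iteratedDeriv 2 f) ∧
      ∀ ξ, ∀ k ∈ ({1, 2, 3} : Finset ℕ), |iteratedDeriv k f ξ| ≤ derivBound σ B K K' := by
  have hf'' : ∀ x, HasDerivAt (deriv (deriv f)) (σ * deriv (deriv f) x - h' x) x := fun x =>
    (((hf' x).hasDerivAt.const_mul σ).sub (hh x)).congr_of_eventuallyEq (.of_forall hode)
  have hd1 := abs_deriv_le_of_deriv_deriv_eq hf hf' hode hfB hhK
  have hd2 (ξ : ℝ) : |deriv (deriv f) ξ| ≤ |σ| * firstDerivBound σ B K + K := by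
    rw [hode]; exact abs_mul_sub_le_of_le (hd1 ξ) (hhK ξ)
  have hd3 (ξ : ℝ) : |deriv (deriv (deriv f)) ξ| ≤
      |σ| * (|σ| * firstDerivBound σ B K + K) + K' := by
    rw [(hf'' ξ).deriv]; exact abs_mul_sub_le_of_le (hd2 ξ) (hh'K' ξ)
  simp only [iteratedDeriv_eq_iterate]
  refine ⟨fun x => (hf'' x).differentiableAt, fun ξ k hk => ?_⟩
  simp only [Finset.mem_insert, Finset.mem_singleton] at hk
  rcases hk with rfl | rfl | rfl
  · exact (hd1 ξ).trans (le_max_left _ _)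
  · exact (hd2 ξ).trans ((le_max_left _ _).trans (le_max_right _ _))
  · exact (hd3 ξ).trans ((le_max_right _ _).trans (le_max_right _ _))

end SecondOrderODE

theorem abs_sub_sub_le_add {α x z Γ : ℝ} (hx : 0 < x) (hxα : x < α) (hz : |z| ≤ Γ) :
    |α - x - z| ≤ α + Γ := by
  obtain ⟨hz₁, hz₂⟩ := abs_le.mp hz
  exact abs_le.mpr ⟨by linarith, by linarith⟩

noncomputable def reactionDerivBound (σ κ α Γ Y₁ : ℝ) : ℝ :=
  let K := κ * (α * (α + Γ))
  let L := firstDerivBound σ α K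
  derivBound σ α K (κ * (L * (α + Γ) + α * (L + Y₁)))

section Reaction

variable {x y : ℝ → ℝ} {σ κ α β Γ Y₁ : ℝ}

theorem abs_reaction_le (hκ : 0 ≤ κ) (hx : ∀ t, 0 < x t ∧ x t < α) (hy : ∀ t, |β * y t| ≤ Γ)
    (t : ℝ) : |κ * (x t * (α - x t - β * y t))| ≤ κ * (α * (α + Γ)) := by
  obtain ⟨hx₀, hxα⟩ := hx t
  rw [abs_mul, abs_mul, abs_of_nonneg hκ, abs_of_pos hx₀]
  gcongr
  · linarith
  · exact abs_sub_sub_le_add hx₀ hxα (hy t)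

theorem abs_deriv_le_of_reaction (hx₂ : ContDiff ℝ 2 x)
    (hode : ∀ t, deriv (deriv x) t = σ * deriv x t - κ * (x t * (α - x t - β * y t)))
    (hκ : 0 ≤ κ) (hx : ∀ t, 0 < x t ∧ x t < α) (hy : ∀ t, |β * y t| ≤ Γ) (t : ℝ) :
    |deriv x t| ≤ firstDerivBound σ α (κ * (α * (α + Γ))) :=
  abs_deriv_le_of_deriv_deriv_eq (hx₂.differentiable two_ne_zero) hx₂.differentiable_deriv_two hode
    (fun t => abs_le.mpr ⟨by linarith [hx t], (hx t).2.le⟩) (abs_reaction_le hκ hx hy) t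

theorem hasDerivAt_reaction (hx : Differentiable ℝ x) (hy : Differentiable ℝ y) (t : ℝ) :
    HasDerivAt (fun t => κ * (x t * (α - x t - β * y t)))
      (κ * (deriv x t * (α - x t - β * y t) - x t * (deriv x t + β * deriv y t))) t := by
  have hg : HasDerivAt (fun t => α - x t - β * y t) (0 - deriv x t - β * deriv y t) t :=
    ((hasDerivAt_const t α).sub (hx t).hasDerivAt).sub ((hy t).hasDerivAt.const_mul β)
  exact (((hx t).hasDerivAt.mul hg).const_mul κ).congr_deriv (by ring)

theorem abs_reaction_deriv_le (hκ : 0 ≤ κ) (hx : ∀ t, 0 < x t ∧ x t < α)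
    (hy : ∀ t, |β * y t| ≤ Γ) {X₁ : ℝ} (hx' : ∀ t, |deriv x t| ≤ X₁)
    (hy' : ∀ t, |β * deriv y t| ≤ Y₁) (t : ℝ) :
    |κ * (deriv x t * (α - x t - β * y t) - x t * (deriv x t + β * deriv y t))| ≤
      κ * (X₁ * (α + Γ) + α * (X₁ + Y₁)) := by
  obtain ⟨hx₀, hxα⟩ := hx t
  rw [abs_mul, abs_of_nonneg hκ]
  gcongr
  refine (abs_sub _ _).trans (add_le_add ?_ ?_) <;> rw [abs_mul]
  · exact mul_le_mul (hx' t) (abs_sub_sub_le_add hx₀ hxα (hy t)) (abs_nonneg _)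
      ((abs_nonneg _).trans (hx' t))
  · exact mul_le_mul (abs_le.mpr ⟨by linarith, hxα.le⟩) ((abs_add_le _ _).trans
      (add_le_add (hx' t) (hy' t))) (abs_nonneg _) (by linarith)

theorem iteratedDeriv_bounds_of_reaction (hx₂ : ContDiff ℝ 2 x) (hy₁ : Differentiable ℝ y)
    (hode : ∀ t, deriv (deriv x) t = σ * deriv x t - κ * (x t * (α - x t - β * y t)))
    (hκ : 0 ≤ κ) (hx : ∀ t, 0 < x t ∧ x t < α) (hy : ∀ t, |β * y t| ≤ Γ)
    (hy' : ∀ t, |β * deriv y t| ≤ Y₁) :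
    Differentiable ℝ (iteratedDeriv 2 x) ∧ ∀ ξ, ∀ k ∈ ({1, 2, 3} : Finset ℕ),
      |iteratedDeriv k x ξ| ≤ reactionDerivBound σ κ α Γ Y₁ :=
  iteratedDeriv_bounds_of_deriv_deriv_eq (hx₂.differentiable two_ne_zero)
    hx₂.differentiable_deriv_two hode
    (hasDerivAt_reaction (hx₂.differentiable two_ne_zero) hy₁)
    (fun t => abs_le.mpr ⟨by linarith [hx t], (hx t).2.le⟩) (abs_reaction_le hκ hx hy)
    (abs_reaction_deriv_le hκ hx hy (abs_deriv_le_of_reaction hx₂ hode hκ hx hy) hy')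

end Reaction

theorem interior_estimate_uniform_in_c_general
    (d s a b M : ℝ) (hd : 0 < d) :
    ∃ C : ℝ, 0 < C ∧
      ∀ c : ℝ, 0 < c → c < 1 / a →
        ∀ u v : ℝ → ℝ, ContDiff ℝ 2 u → ContDiff ℝ 2 v →
          (∀ ξ : ℝ, deriv (deriv u) ξ - s * deriv u ξ + u ξ * (1 - u ξ - c * v ξ) = 0) →
          (∀ ξ : ℝ, d * deriv (deriv v) ξ - s * deriv v ξ + v ξ * (a - b * u ξ - v ξ) = 0) →
          (∀ ξ : ℝ, 0 < u ξ ∧ u ξ < 1) → (∀ ξ : ℝ, 0 < v ξ ∧ v ξ < a) →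
          (Differentiable ℝ (iteratedDeriv 2 u) ∧ Differentiable ℝ (iteratedDeriv 2 v)) ∧
          ∀ ξ ∈ Set.Icc (-M) M, ∀ k ∈ ({1, 2, 3} : Finset ℕ),
            |iteratedDeriv k u ξ| ≤ C ∧ |iteratedDeriv k v ξ| ≤ C := by
  set Lu := firstDerivBound s 1 (1 * (1 * (1 + 1)))
  set Lv := firstDerivBound (s / d) a (1 / d * (a * (a + |b|)))
  refine ⟨max (reactionDerivBound s 1 1 1 (1 / a * Lv))
    (reactionDerivBound (s / d) (1 / d) a |b| (|b| * Lu)), ?_, ?_⟩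
  · exact lt_max_of_lt_left <| (by unfold Lu firstDerivBound; positivity : 0 < Lu).trans_le
      (le_max_left _ _)
  intro c hc hca u v hu hv hodeu hodev hub hvb
  have ha : 0 < a := (hvb 0).1.trans (hvb 0).2
  have hcv (ξ : ℝ) : |c * v ξ| ≤ 1 := by
    rw [abs_of_pos (mul_pos hc (hvb ξ).1)]
    calc c * v ξ ≤ 1 / a * a := mul_le_mul hca.le (hvb ξ).2.le (hvb ξ).1.le (by positivity)
      _ = 1 := by field_simp
  have hbu (ξ : ℝ) : |b * u ξ| ≤ |b| := by
    rw [abs_mul]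
    exact mul_le_of_le_one_right (abs_nonneg b) (abs_le.mpr ⟨by linarith [hub ξ], (hub ξ).2.le⟩)
  have hodeu' (ξ : ℝ) :
      deriv (deriv u) ξ = s * deriv u ξ - 1 * (u ξ * (1 - u ξ - c * v ξ)) := by
    linarith [hodeu ξ]
  have hodev' (ξ : ℝ) :
      deriv (deriv v) ξ = s / d * deriv v ξ - 1 / d * (v ξ * (a - v ξ - b * u ξ)) := by
    field_simp; linarith [hodev ξ]
  have hu' := abs_deriv_le_of_reaction hu hodeu' zero_le_one hub hcv
  have hv' := abs_deriv_le_of_reaction hv hodev' (by positivity) hvb hbu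
  obtain ⟨hu₂, hu_le⟩ := iteratedDeriv_bounds_of_reaction hu (hv.differentiable two_ne_zero)
    hodeu' zero_le_one hub hcv (Y₁ := 1 / a * Lv) fun ξ => by
      rw [abs_mul, abs_of_pos hc]
      exact mul_le_mul hca.le (hv' ξ) (abs_nonneg _) (by positivity)
  obtain ⟨hv₂, hv_le⟩ := iteratedDeriv_bounds_of_reaction hv (hu.differentiable two_ne_zero)
    hodev' (by positivity) hvb hbu (Y₁ := |b| * Lu) fun ξ => by
      rw [abs_mul]; exact mul_le_mul_of_nonneg_left (hu' ξ) (abs_nonneg b)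
  exact ⟨⟨hu₂, hv₂⟩, fun ξ _ k hk =>
    ⟨(hu_le ξ k hk).trans (le_max_left _ _), (hv_le ξ k hk).trans (le_max_right _ _)⟩⟩

/-- Interior derivative estimates, uniform in `c`: on any compact interval
`[-M, M]`, the first three derivatives of a bounded positive solution of the
traveling-wave system are bounded by a constant depending only on
`M, s, d, a, b` (and not on `c ∈ (0, 1/a)`). -/
theorem interior_estimate_uniform_in_c
    (d s a b M : ℝ) (hd : 0 < d) (hb : 0 < b) (hba : b < a) (hM : 0 < M) :
    ∃ C : ℝ, 0 < C ∧
      ∀ c : ℝ, 0 < c → c < 1 / a →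
        ∀ u v : ℝ → ℝ, ContDiff ℝ 2 u → ContDiff ℝ 2 v →
          (∀ ξ : ℝ, deriv (deriv u) ξ - s * deriv u ξ + u ξ * (1 - u ξ - c * v ξ) = 0) →
          (∀ ξ : ℝ, d * deriv (deriv v) ξ - s * deriv v ξ + v ξ * (a - b * u ξ - v ξ) = 0) →
          (∀ ξ : ℝ, 0 < u ξ ∧ u ξ < 1) → (∀ ξ : ℝ, 0 < v ξ ∧ v ξ < a) →
          (Differentiable ℝ (iteratedDeriv 2 u) ∧ Differentiable ℝ (iteratedDeriv 2 v)) ∧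
          ∀ ξ ∈ Set.Icc (-M) M, ∀ k ∈ ({1, 2, 3} : Finset ℕ),
            |iteratedDeriv k u ξ| ≤ C ∧ |iteratedDeriv k v ξ| ≤ C :=
  interior_estimate_uniform_in_c_general d s a b M hd
end

section
/- Fix d > 0, s ∈ ℝ, a, c > 0 with a < 1/c, and M > 0. Then there exists a constant C > 0, depending only on M, s, d, a, c (and in particular independent of b), such that for every b with 0 < b < a and every pair (u, v) of twice continuously differentiable functions solving u'' − s·u' + u·(1 − u − c·v) = 0 and d·v'' − s·v' + v·(a − b·u − v) = 0 on ℝ with 0 < u(ξ) < 1 and 0 < v(ξ) < a for all ξ ∈ ℝ, the functions u and v are three times differentiable on ℝ and for every ξ ∈ [−M, M] and every k ∈ {1, 2, 3} one has |u^{(k)}(ξ)| ≤ C and |v^{(k)}(ξ)| ≤ C. -/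
/-!
Each equation has the form `f'' - p f' = g` with `|f|` and `|g|` bounded by constants that do not
depend on `b ∈ (0, a)`. By the mean value theorem `|f'| ≤ 2 sup |f|` somewhere in every
interval of length one, and Grönwall's inequality for `f'` carries this bound across that
interval, so `f'` is bounded on all of `ℝ`. The equations then bound `f''`, and differentiating
them bounds `f'''`.
-/

open Set

theorem abs_deriv_le_gronwallBound {f : ℝ → ℝ} {p B K : ℝ} (hf : ContDiff ℝ 2 f)
    (hB : ∀ t, |f t| ≤ B) (hK : ∀ t, |deriv (deriv f) t - p * deriv f t| ≤ K) (ξ : ℝ) :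
    |deriv f ξ| ≤ gronwallBound (2 * B) |p| K 1 := by
  have hf₁ : Differentiable ℝ f := hf.differentiable two_ne_zero
  have hf₂ : Differentiable ℝ (deriv f) := (hf.deriv' (n := 1)).differentiable one_ne_zero
  obtain ⟨η, hη, hslope⟩ := exists_deriv_eq_slope f (sub_one_lt ξ)
    hf₁.continuous.continuousOn fun x _ ↦ (hf₁ x).differentiableWithinAt
  have hη₀ : ‖deriv f η‖ ≤ 2 * B := by
    rw [hslope, sub_sub_cancel, div_one, Real.norm_eq_abs]
    linarith [abs_sub (f ξ) (f (ξ - 1)), hB ξ, hB (ξ - 1)]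
  have hgrowth : ∀ x ∈ Ico η ξ, ‖deriv (deriv f) x‖ ≤ |p| * ‖deriv f x‖ + K := fun x _ ↦ by
    simp only [Real.norm_eq_abs]
    linarith [abs_sub_abs_le_abs_sub (deriv (deriv f) x) (p * deriv f x),
      abs_mul p (deriv f x), hK x]
  calc |deriv f ξ| ≤ gronwallBound (2 * B) |p| K (ξ - η) :=
        norm_le_gronwallBound_of_norm_deriv_right_le hf₂.continuous.continuousOn
          (fun x _ ↦ (hf₂ x).hasDerivAt.hasDerivWithinAt) hη₀ hgrowth ξ ⟨hη.2.le, le_rfl⟩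
    _ ≤ gronwallBound (2 * B) |p| K 1 :=
        gronwallBound_mono (by linarith [abs_nonneg (f ξ), hB ξ])
          ((abs_nonneg _).trans (hK ξ)) (abs_nonneg p) (by linarith [hη.1])

structure IsBoundedTravelingWave (d s a b c : ℝ) (u v : ℝ → ℝ) : Prop where
  contDiff_u : ContDiff ℝ 2 u
  contDiff_v : ContDiff ℝ 2 v
  ode_u : ∀ ξ, deriv (deriv u) ξ - s * deriv u ξ + u ξ * (1 - u ξ - c * v ξ) = 0
  ode_v : ∀ ξ, d * deriv (deriv v) ξ - s * deriv v ξ + v ξ * (a - b * u ξ - v ξ) = 0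
  mem_u : ∀ ξ, 0 < u ξ ∧ u ξ < 1
  mem_v : ∀ ξ, 0 < v ξ ∧ v ξ < a

namespace IsBoundedTravelingWave

variable {d s a b c : ℝ} {u v : ℝ → ℝ} (h : IsBoundedTravelingWave d s a b c u v)
include h

theorem abs_u_le (ξ : ℝ) : |u ξ| ≤ 1 :=
  abs_le.mpr ⟨by linarith [(h.mem_u ξ).1], (h.mem_u ξ).2.le⟩

theorem abs_v_le (ξ : ℝ) : |v ξ| ≤ a :=
  abs_le.mpr ⟨by linarith [h.mem_v ξ], (h.mem_v ξ).2.le⟩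

theorem abs_growth_u_le (hc : 0 ≤ c) (ξ : ℝ) : |1 - u ξ - c * v ξ| ≤ 1 + c * a := by
  obtain ⟨hu₀, hu₁⟩ := h.mem_u ξ
  obtain ⟨hv₀, hv₁⟩ := h.mem_v ξ
  rw [abs_le]
  constructor <;> nlinarith

theorem abs_growth_v_le (hb : 0 < b) (hba : b < a) (ξ : ℝ) : |a - b * u ξ - v ξ| ≤ a := by
  obtain ⟨hu₀, hu₁⟩ := h.mem_u ξ
  obtain ⟨hv₀, hv₁⟩ := h.mem_v ξ
  rw [abs_le]
  constructor <;> nlinarith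

theorem deriv_deriv_u :
    deriv (deriv u) = fun ξ ↦ s * deriv u ξ - u ξ * (1 - u ξ - c * v ξ) :=
  funext fun ξ ↦ by linarith [h.ode_u ξ]

theorem deriv_deriv_v (hd : d ≠ 0) :
    deriv (deriv v) = fun ξ ↦ (s * deriv v ξ - v ξ * (a - b * u ξ - v ξ)) / d :=
  funext fun ξ ↦ by rw [eq_div_iff hd]; linarith [h.ode_v ξ]

theorem hasDerivAt_deriv_deriv_u (ξ : ℝ) :
    HasDerivAt (deriv (deriv u)) (s * deriv (deriv u) ξ -
      (deriv u ξ * (1 - u ξ - c * v ξ) + u ξ * (-deriv u ξ - c * deriv v ξ))) ξ := by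
  have hu := (h.contDiff_u.differentiable two_ne_zero ξ).hasDerivAt
  have hv := (h.contDiff_v.differentiable two_ne_zero ξ).hasDerivAt
  have hu' := ((h.contDiff_u.deriv' (n := 1)).differentiable one_ne_zero ξ).hasDerivAt
  rw [h.deriv_deriv_u] at hu' ⊢
  exact (hu'.const_mul s).fun_sub (hu.fun_mul ((hu.const_sub 1).fun_sub (hv.const_mul c)))

theorem hasDerivAt_deriv_deriv_v (hd : d ≠ 0) (ξ : ℝ) :
    HasDerivAt (deriv (deriv v)) ((s * deriv (deriv v) ξ -
      (deriv v ξ * (a - b * u ξ - v ξ) + v ξ * (-(b * deriv u ξ) - deriv v ξ))) / d) ξ := by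
  have hu := (h.contDiff_u.differentiable two_ne_zero ξ).hasDerivAt
  have hv := (h.contDiff_v.differentiable two_ne_zero ξ).hasDerivAt
  have hv' := ((h.contDiff_v.deriv' (n := 1)).differentiable one_ne_zero ξ).hasDerivAt
  rw [h.deriv_deriv_v hd] at hv' ⊢
  exact ((hv'.const_mul s).fun_sub
    (hv.fun_mul (((hu.const_mul b).const_sub a).fun_sub hv))).div_const d

theorem abs_reaction_u_le (hc : 0 ≤ c) (ξ : ℝ) :
    |u ξ * (1 - u ξ - c * v ξ)| ≤ 1 + c * a := by
  rw [abs_mul, ← one_mul (1 + c * a)]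
  exact mul_le_mul (h.abs_u_le ξ) (h.abs_growth_u_le hc ξ) (abs_nonneg _) zero_le_one

theorem abs_reaction_v_le (hb : 0 < b) (hba : b < a) (ξ : ℝ) :
    |v ξ * (a - b * u ξ - v ξ)| ≤ a * a := by
  rw [abs_mul]
  exact mul_le_mul (h.abs_v_le ξ) (h.abs_growth_v_le hb hba ξ) (abs_nonneg _) (hb.trans hba).le

theorem abs_deriv_u_le (hc : 0 ≤ c) (ξ : ℝ) :
    |deriv u ξ| ≤ gronwallBound 2 |s| (1 + c * a) 1 := by
  have hK (t : ℝ) : |deriv (deriv u) t - s * deriv u t| ≤ 1 + c * a := by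
    rw [h.deriv_deriv_u, sub_sub_cancel_left, abs_neg]
    exact h.abs_reaction_u_le hc t
  simpa only [mul_one] using abs_deriv_le_gronwallBound h.contDiff_u h.abs_u_le hK ξ

theorem abs_deriv_v_le (hd : 0 < d) (hb : 0 < b) (hba : b < a) (ξ : ℝ) :
    |deriv v ξ| ≤ gronwallBound (2 * a) |s / d| (a * a / d) 1 := by
  have hK (t : ℝ) : |deriv (deriv v) t - s / d * deriv v t| ≤ a * a / d := by
    rw [h.deriv_deriv_v hd.ne', div_mul_eq_mul_div, ← sub_div, sub_sub_cancel_left, abs_div,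
      abs_neg, abs_of_pos hd]
    gcongr
    exact h.abs_reaction_v_le hb hba t
  exact abs_deriv_le_gronwallBound h.contDiff_v h.abs_v_le hK ξ

theorem abs_deriv_deriv_u_le (hc : 0 ≤ c) (ξ : ℝ) :
    |deriv (deriv u) ξ| ≤ |s| * |deriv u ξ| + (1 + c * a) := by
  rw [h.deriv_deriv_u, ← abs_mul]
  exact (abs_sub _ _).trans (add_le_add_right (h.abs_reaction_u_le hc ξ) _)

theorem abs_deriv_deriv_v_le (hd : 0 < d) (hb : 0 < b) (hba : b < a) (ξ : ℝ) :
    |deriv (deriv v) ξ| ≤ (|s| * |deriv v ξ| + a * a) / d := by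
  rw [h.deriv_deriv_v hd.ne', abs_div, abs_of_pos hd, ← abs_mul]
  gcongr
  exact (abs_sub _ _).trans (add_le_add_right (h.abs_reaction_v_le hb hba ξ) _)

theorem abs_deriv_deriv_deriv_u_le (hc : 0 ≤ c) (ξ : ℝ) :
    |deriv (deriv (deriv u)) ξ| ≤ |s| * |deriv (deriv u) ξ| + |deriv u ξ| * (1 + c * a) +
      (|deriv u ξ| + c * |deriv v ξ|) := by
  rw [(h.hasDerivAt_deriv_deriv_u ξ).deriv]
  have hw : |-deriv u ξ - c * deriv v ξ| ≤ |deriv u ξ| + c * |deriv v ξ| := by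
    simpa only [abs_neg, abs_mul, abs_of_nonneg hc] using abs_sub (-deriv u ξ) (c * deriv v ξ)
  have h₁ := mul_le_mul_of_nonneg_left (h.abs_growth_u_le hc ξ) (abs_nonneg (deriv u ξ))
  have h₂ := mul_le_mul (h.abs_u_le ξ) hw (abs_nonneg _) zero_le_one
  calc _ ≤ |s * deriv (deriv u) ξ| + (|deriv u ξ * (1 - u ξ - c * v ξ)| +
        |u ξ * (-deriv u ξ - c * deriv v ξ)|) :=
        (abs_sub _ _).trans (add_le_add_right (abs_add_le _ _) _)
    _ ≤ _ := by simp only [abs_mul]; linarith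

theorem abs_deriv_deriv_deriv_v_le (hd : 0 < d) (hb : 0 < b) (hba : b < a) (ξ : ℝ) :
    |deriv (deriv (deriv v)) ξ| ≤ (|s| * |deriv (deriv v) ξ| + |deriv v ξ| * a +
      a * (a * |deriv u ξ| + |deriv v ξ|)) / d := by
  rw [(h.hasDerivAt_deriv_deriv_v hd.ne' ξ).deriv, abs_div, abs_of_pos hd]
  gcongr
  have hw : |-(b * deriv u ξ) - deriv v ξ| ≤ a * |deriv u ξ| + |deriv v ξ| := by
    calc _ ≤ |b * deriv u ξ| + |deriv v ξ| := by
          simpa only [abs_neg] using abs_sub (-(b * deriv u ξ)) (deriv v ξ)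
      _ ≤ _ := by rw [abs_mul, abs_of_pos hb]; gcongr
  have h₁ := mul_le_mul_of_nonneg_left (h.abs_growth_v_le hb hba ξ) (abs_nonneg (deriv v ξ))
  have h₂ := mul_le_mul (h.abs_v_le ξ) hw (abs_nonneg _) (hb.trans hba).le
  calc _ ≤ |s * deriv (deriv v) ξ| + (|deriv v ξ * (a - b * u ξ - v ξ)| +
        |v ξ * (-(b * deriv u ξ) - deriv v ξ)|) :=
        (abs_sub _ _).trans (add_le_add_right (abs_add_le _ _) _)
    _ ≤ _ := by simp only [abs_mul]; linarith

end IsBoundedTravelingWave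

def UniformDerivBound (d s a c : ℝ) (k : ℕ) : Prop :=
  ∃ C, ∀ b ∈ Ioo 0 a, ∀ u v, IsBoundedTravelingWave d s a b c u v →
    ∀ ξ, |deriv^[k] u ξ| ≤ C ∧ |deriv^[k] v ξ| ≤ C

section UniformDerivBound

variable {d s a c : ℝ}

theorem uniformDerivBound_one (hd : 0 < d) (hc : 0 ≤ c) : UniformDerivBound d s a c 1 :=
  ⟨max (gronwallBound 2 |s| (1 + c * a) 1) (gronwallBound (2 * a) |s / d| (a * a / d) 1),
    fun _ hb _ _ h ξ ↦ ⟨(h.abs_deriv_u_le hc ξ).trans (le_max_left _ _),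
      (h.abs_deriv_v_le hd hb.1 hb.2 ξ).trans (le_max_right _ _)⟩⟩

theorem uniformDerivBound_two (hd : 0 < d) (hc : 0 ≤ c) (h₁ : UniformDerivBound d s a c 1) :
    UniformDerivBound d s a c 2 := by
  obtain ⟨C₁, hC₁⟩ := h₁
  refine ⟨max (|s| * C₁ + (1 + c * a)) ((|s| * C₁ + a * a) / d), fun b hb u v h ξ ↦ ?_⟩
  obtain ⟨hu₁, hv₁⟩ := hC₁ b hb u v h ξ
  constructor
  · calc |deriv (deriv u) ξ| ≤ |s| * |deriv u ξ| + (1 + c * a) := h.abs_deriv_deriv_u_le hc ξ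
      _ ≤ |s| * C₁ + (1 + c * a) := by gcongr; exact hu₁
      _ ≤ _ := le_max_left _ _
  · calc |deriv (deriv v) ξ| ≤ (|s| * |deriv v ξ| + a * a) / d :=
          h.abs_deriv_deriv_v_le hd hb.1 hb.2 ξ
      _ ≤ (|s| * C₁ + a * a) / d := by gcongr; exact hv₁
      _ ≤ _ := le_max_right _ _

theorem uniformDerivBound_three (hd : 0 < d) (hc : 0 ≤ c) (h₁ : UniformDerivBound d s a c 1)
    (h₂ : UniformDerivBound d s a c 2) : UniformDerivBound d s a c 3 := by
  obtain ⟨C₁, hC₁⟩ := h₁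
  obtain ⟨C₂, hC₂⟩ := h₂
  refine ⟨max (|s| * C₂ + C₁ * (1 + c * a) + (C₁ + c * C₁))
    ((|s| * C₂ + C₁ * a + a * (a * C₁ + C₁)) / d), fun b hb u v h ξ ↦ ?_⟩
  obtain ⟨hu₁, hv₁⟩ := hC₁ b hb u v h ξ
  obtain ⟨hu₂, hv₂⟩ := hC₂ b hb u v h ξ
  have ha : 0 ≤ a := (hb.1.trans hb.2).le
  constructor
  · calc |deriv (deriv (deriv u)) ξ|
          ≤ |s| * |deriv (deriv u) ξ| + |deriv u ξ| * (1 + c * a) +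
            (|deriv u ξ| + c * |deriv v ξ|) := h.abs_deriv_deriv_deriv_u_le hc ξ
      _ ≤ |s| * C₂ + C₁ * (1 + c * a) + (C₁ + c * C₁) := by gcongr <;> assumption
      _ ≤ _ := le_max_left _ _
  · calc |deriv (deriv (deriv v)) ξ|
          ≤ (|s| * |deriv (deriv v) ξ| + |deriv v ξ| * a +
            a * (a * |deriv u ξ| + |deriv v ξ|)) / d := h.abs_deriv_deriv_deriv_v_le hd hb.1 hb.2 ξ
      _ ≤ (|s| * C₂ + C₁ * a + a * (a * C₁ + C₁)) / d := by gcongr <;> assumption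
      _ ≤ _ := le_max_right _ _

end UniformDerivBound

theorem interior_estimate_uniform_in_b_general
    (d s a c M : ℝ) (hd : 0 < d) (hc : 0 < c) :
    ∃ C : ℝ, 0 < C ∧
      ∀ b : ℝ, 0 < b → b < a →
        ∀ u v : ℝ → ℝ, ContDiff ℝ 2 u → ContDiff ℝ 2 v →
          (∀ ξ : ℝ, deriv (deriv u) ξ - s * deriv u ξ + u ξ * (1 - u ξ - c * v ξ) = 0) →
          (∀ ξ : ℝ, d * deriv (deriv v) ξ - s * deriv v ξ + v ξ * (a - b * u ξ - v ξ) = 0) →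
          (∀ ξ : ℝ, 0 < u ξ ∧ u ξ < 1) → (∀ ξ : ℝ, 0 < v ξ ∧ v ξ < a) →
          (Differentiable ℝ (iteratedDeriv 2 u) ∧ Differentiable ℝ (iteratedDeriv 2 v)) ∧
          ∀ ξ ∈ Set.Icc (-M) M, ∀ k ∈ ({1, 2, 3} : Finset ℕ),
            |iteratedDeriv k u ξ| ≤ C ∧ |iteratedDeriv k v ξ| ≤ C := by
  obtain ⟨C₁, h₁⟩ := uniformDerivBound_one (s := s) (a := a) hd hc.le
  obtain ⟨C₂, h₂⟩ := uniformDerivBound_two hd hc.le ⟨C₁, h₁⟩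
  obtain ⟨C₃, h₃⟩ := uniformDerivBound_three hd hc.le ⟨C₁, h₁⟩ ⟨C₂, h₂⟩
  refine ⟨1 + |C₁| + |C₂| + |C₃|, by positivity,
    fun b hb hba u v hu hv hode_u hode_v hmem_u hmem_v ↦ ?_⟩
  have hw : IsBoundedTravelingWave d s a b c u v := ⟨hu, hv, hode_u, hode_v, hmem_u, hmem_v⟩
  simp only [iteratedDeriv_eq_iterate]
  refine ⟨⟨fun ξ ↦ (hw.hasDerivAt_deriv_deriv_u ξ).differentiableAt,
    fun ξ ↦ (hw.hasDerivAt_deriv_deriv_v hd.ne' ξ).differentiableAt⟩, fun ξ _ k hk ↦ ?_⟩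
  obtain ⟨hu₁, hv₁⟩ := h₁ b ⟨hb, hba⟩ u v hw ξ
  obtain ⟨hu₂, hv₂⟩ := h₂ b ⟨hb, hba⟩ u v hw ξ
  obtain ⟨hu₃, hv₃⟩ := h₃ b ⟨hb, hba⟩ u v hw ξ
  fin_cases hk <;> constructor <;> linarith [le_abs_self C₁, le_abs_self C₂, le_abs_self C₃,
    abs_nonneg C₁, abs_nonneg C₂, abs_nonneg C₃]

/-- Interior derivative estimates, uniform in `b`: on any compact interval
`[-M, M]`, the first three derivatives of a bounded positive solution of the
traveling-wave system are bounded by a constant depending only on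
`M, s, d, a, c` (and not on `b ∈ (0, a)`). -/
theorem interior_estimate_uniform_in_b
    (d s a c M : ℝ) (hd : 0 < d) (ha : 0 < a) (hc : 0 < c) (hac : a < 1 / c)
    (hM : 0 < M) :
    ∃ C : ℝ, 0 < C ∧
      ∀ b : ℝ, 0 < b → b < a →
        ∀ u v : ℝ → ℝ, ContDiff ℝ 2 u → ContDiff ℝ 2 v →
          (∀ ξ : ℝ, deriv (deriv u) ξ - s * deriv u ξ + u ξ * (1 - u ξ - c * v ξ) = 0) →
          (∀ ξ : ℝ, d * deriv (deriv v) ξ - s * deriv v ξ + v ξ * (a - b * u ξ - v ξ) = 0) →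
          (∀ ξ : ℝ, 0 < u ξ ∧ u ξ < 1) → (∀ ξ : ℝ, 0 < v ξ ∧ v ξ < a) →
          (Differentiable ℝ (iteratedDeriv 2 u) ∧ Differentiable ℝ (iteratedDeriv 2 v)) ∧
          ∀ ξ ∈ Set.Icc (-M) M, ∀ k ∈ ({1, 2, 3} : Finset ℕ),
            |iteratedDeriv k u ξ| ≤ C ∧ |iteratedDeriv k v ξ| ≤ C :=
  interior_estimate_uniform_in_b_general d s a c M hd hc
end
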